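/- arXiv:1812.00001 — 7 statements merged into one kernel-verified Lean document; each statement's English description precedes it below -/
import Mathlib

section
/- Let φ : [0,1] → ℝ be ℓ-times continuously differentiable on (0,1) with ℓth divergence speed p^α, i.e., there exist constants W_ℓ > 0, c_ℓ ≥ 0, c'_ℓ ≥ 0 such that W_ℓ p^{α-ℓ} - c'_ℓ ≤ |φ^{(ℓ)}(p)| ≤ W_ℓ p^{α-ℓ} + c_ℓ for all p ∈ (0,1). If ℓ > 1 + α, then the (ℓ-1)th divergence speed of φ is also p^α: there exist constants W_{ℓ-1} > 0, c_{ℓ-1} ≥ 0, c'_{ℓ-1} ≥ 0 with W_{ℓ-1} p^{α-(ℓ-1)} - c'_{ℓ-1} ≤ |φ^{(ℓ-1)}(p)| ≤ W_{ℓ-1} p^{α-(ℓ-1)} + c_{ℓ-1} for all p ∈ (0,1). -/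
/-!
Write `f = φ^{(ℓ-1)}`, `g = f' = φ^{(ℓ)}` and `r = α - ℓ < -1`, and let
`P x = W / -(r+1) * x^(r+1)`, a primitive of `-W x^r` which blows up at `0`.
Since `|g| ≤ W x^r + c`, both `f + P - c x` and `-f + P - c x` are antitone, so `f` differs from
`f (1/2)` by at most `P` plus a constant. Near `0` we have `|g| ≥ W x^r - c' > 0`, so `g` has
constant sign there and `±f + P + c' x` is monotone, which bounds `|f|` from below by `P` minus a
constant.
-/

open Set

section Comparison

variable {f f' G G' : ℝ → ℝ} {s : Set ℝ}

theorem sub_le_sub_of_hasDerivAt_le (hs : s.OrdConnected)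
    (hf : ∀ x ∈ s, HasDerivAt f (f' x) x) (hG : ∀ x ∈ s, HasDerivAt G (G' x) x)
    (h : ∀ x ∈ s, G' x ≤ f' x) {a b : ℝ} (ha : a ∈ s) (hb : b ∈ s) (hab : a ≤ b) :
    G b - G a ≤ f b - f a := by
  have hmono : MonotoneOn (f - G) s :=
    monotoneOn_of_hasDerivWithinAt_nonneg hs.convex
      (fun x hx => ((hf x hx).sub (hG x hx)).continuousAt.continuousWithinAt)
      (fun x hx => ((hf x (interior_subset hx)).sub (hG x (interior_subset hx))).hasDerivWithinAt)
      (fun x hx => sub_nonneg.2 (h x (interior_subset hx)))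
  have := hmono ha hb hab
  simp only [Pi.sub_apply] at this
  linarith

theorem abs_sub_le_of_abs_hasDerivAt_le (hs : s.OrdConnected)
    (hf : ∀ x ∈ s, HasDerivAt f (f' x) x) (hG : ∀ x ∈ s, HasDerivAt G (G' x) x)
    (h : ∀ x ∈ s, |f' x| ≤ -G' x) {a b : ℝ} (ha : a ∈ s) (hb : b ∈ s) (hab : a ≤ b) :
    |f b - f a| ≤ G a - G b := by
  have hle := sub_le_sub_of_hasDerivAt_le hs hf hG
    (fun x hx => by linarith [neg_abs_le (f' x), h x hx]) ha hb hab
  have hge := sub_le_sub_of_hasDerivAt_le hs (fun x hx => (hf x hx).neg) hG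
    (fun x hx => by linarith [le_abs_self (f' x), h x hx]) ha hb hab
  simp only [Pi.neg_apply] at hge
  rw [abs_le]
  constructor <;> linarith

theorem IsPreconnected.forall_pos_or_forall_neg {X : Type*} [TopologicalSpace X] {s : Set X}
    {g : X → ℝ} (hs : IsPreconnected s) (hg : ContinuousOn g s) (h0 : ∀ x ∈ s, g x ≠ 0) :
    (∀ x ∈ s, 0 < g x) ∨ (∀ x ∈ s, g x < 0) := by
  by_contra! hcon
  obtain ⟨⟨a, ha, hga⟩, ⟨b, hb, hgb⟩⟩ := hcon
  obtain ⟨x, hx, hgx⟩ := hs.intermediate_value ha hb hg ⟨hga, hgb⟩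
  exact h0 x hx hgx

theorem le_abs_sub_of_le_abs_hasDerivAt (hs : s.OrdConnected)
    (hf : ∀ x ∈ s, HasDerivAt f (f' x) x) (hf' : ContinuousOn f' s)
    (hG : ∀ x ∈ s, HasDerivAt G (G' x) x) (hG'pos : ∀ x ∈ s, 0 < G' x)
    (h : ∀ x ∈ s, G' x ≤ |f' x|) {a b : ℝ} (ha : a ∈ s) (hb : b ∈ s) (hab : a ≤ b) :
    G b - G a ≤ |f b - f a| := by
  have hne : ∀ x ∈ s, f' x ≠ 0 := fun x hx hx0 => by
    linarith [hG'pos x hx, h x hx, abs_eq_zero.2 hx0]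
  rcases hs.isPreconnected.forall_pos_or_forall_neg hf' hne with hpos | hneg
  · have := sub_le_sub_of_hasDerivAt_le hs hf hG
      (fun x hx => by simpa only [abs_of_pos (hpos x hx)] using h x hx) ha hb hab
    exact this.trans (le_abs_self _)
  · have := sub_le_sub_of_hasDerivAt_le hs (fun x hx => (hf x hx).neg) hG
      (fun x hx => by simpa only [abs_of_neg (hneg x hx)] using h x hx) ha hb hab
    simp only [Pi.neg_apply] at this
    exact this.trans (by linarith [neg_le_abs (f b - f a)])

end Comparison

section PowerBounds

variable {f g : ℝ → ℝ} {r W : ℝ}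

theorem hasDerivAt_div_neg_mul_rpow_add_one (hr : r ≠ -1) {x : ℝ} (hx : x ≠ 0) :
    HasDerivAt (fun x => W / -(r + 1) * x ^ (r + 1)) (-(W * x ^ r)) x := by
  have hr' : r + 1 ≠ 0 := fun h => hr (by linarith)
  refine ((Real.hasDerivAt_rpow_const (Or.inl hx)).const_mul (W / -(r + 1))).congr_deriv ?_
  rw [add_sub_cancel_right]
  field_simp

theorem exists_forall_lt_mul_rpow (hr : r < 0) (hW : 0 < W) (C : ℝ) :
    ∃ δ ∈ Ioo (0 : ℝ) 1, ∀ x ∈ Ioc 0 δ, C < W * x ^ r := by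
  set E := (|C| / W + 1) ^ r⁻¹
  have hbase : 0 < |C| / W + 1 := by positivity
  have hE : 0 < E := Real.rpow_pos_of_pos hbase _
  refine ⟨min (1 / 2) E, ⟨lt_min (by norm_num) hE, by linarith [min_le_left (1 / 2 : ℝ) E]⟩,
    fun x hx => ?_⟩
  have hxr : |C| / W + 1 ≤ x ^ r := by
    calc |C| / W + 1 = E ^ r := (Real.rpow_inv_rpow hbase.le hr.ne).symm
      _ ≤ x ^ r := Real.rpow_le_rpow_of_nonpos hx.1 (hx.2.trans (min_le_right _ _)) hr.le
  have : |C| + W ≤ W * x ^ r := by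
    calc |C| + W = W * (|C| / W + 1) := by field_simp
      _ ≤ W * x ^ r := mul_le_mul_of_nonneg_left hxr hW.le
  linarith [le_abs_self C]

theorem abs_le_div_neg_mul_rpow_add_one_add {c : ℝ} (hr : r < -1) (hW : 0 ≤ W) (hc : 0 ≤ c)
    (hf : ∀ x ∈ Ioo 0 1, HasDerivAt f (g x) x)
    (hub : ∀ x ∈ Ioo 0 1, |g x| ≤ W * x ^ r + c) :
    ∃ C, 0 ≤ C ∧ ∀ p ∈ Ioo 0 1, |f p| ≤ W / -(r + 1) * p ^ (r + 1) + C := by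
  set P : ℝ → ℝ := fun x => W / -(r + 1) * x ^ (r + 1)
  have hP : ∀ x ∈ Ioo (0 : ℝ) 1, 0 ≤ P x := fun x hx =>
    mul_nonneg (div_nonneg hW (by linarith)) (Real.rpow_nonneg hx.1.le _)
  have hcomp : ∀ a ∈ Ioo (0 : ℝ) 1, ∀ b ∈ Ioo (0 : ℝ) 1, a ≤ b →
      |f b - f a| ≤ (P a - c * a) - (P b - c * b) :=
    fun a ha b hb hab => abs_sub_le_of_abs_hasDerivAt_le ordConnected_Ioo hf
      (G' := fun x => -(W * x ^ r) - c)
      (fun x hx => ((hasDerivAt_div_neg_mul_rpow_add_one hr.ne hx.1.ne').sub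
        ((hasDerivAt_id x).const_mul c)).congr_deriv (by ring))
      (fun x hx => by linarith [hub x hx]) ha hb hab
  have hq : (1 / 2 : ℝ) ∈ Ioo 0 1 := by norm_num
  refine ⟨|f (1 / 2)| + P (1 / 2) + c, by linarith [abs_nonneg (f (1 / 2)), hP _ hq], ?_⟩
  intro p hp
  show |f p| ≤ P p + _
  have htri := abs_sub_abs_le_abs_sub (f p) (f (1 / 2))
  rcases le_total p (1 / 2) with hple | hqle
  · have := hcomp p hp _ hq hple
    rw [abs_sub_comm] at this
    linarith [hP _ hq, mul_nonneg hc hp.1.le]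
  · have := hcomp _ hq p hp hqle
    linarith [hP _ hp, mul_le_of_le_one_right hc hp.2.le]

theorem div_neg_mul_rpow_add_one_sub_le_abs {c' : ℝ} (hr : r < -1) (hW : 0 < W) (hc' : 0 ≤ c')
    (hf : ∀ x ∈ Ioo 0 1, HasDerivAt f (g x) x) (hg : ContinuousOn g (Ioo 0 1))
    (hlb : ∀ x ∈ Ioo 0 1, W * x ^ r - c' ≤ |g x|) :
    ∃ C', 0 ≤ C' ∧ ∀ p ∈ Ioo 0 1, W / -(r + 1) * p ^ (r + 1) - C' ≤ |f p| := by
  set P : ℝ → ℝ := fun x => W / -(r + 1) * x ^ (r + 1)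
  obtain ⟨δ, hδ, hsmall⟩ := exists_forall_lt_mul_rpow (r := r) (by linarith) hW c'
  have hsub : Ioc 0 δ ⊆ Ioo 0 1 := Ioc_subset_Ioo_right hδ.2
  have hδs : δ ∈ Ioc 0 δ := ⟨hδ.1, le_rfl⟩
  have hcomp : ∀ p ∈ Ioc 0 δ, -(P δ + c' * δ) - -(P p + c' * p) ≤ |f δ - f p| :=
    fun p hp => le_abs_sub_of_le_abs_hasDerivAt ordConnected_Ioc (G' := fun x => W * x ^ r - c')
      (fun x hx => hf x (hsub hx)) (hg.mono hsub)
      (fun x hx => (((hasDerivAt_div_neg_mul_rpow_add_one hr.ne hx.1.ne').add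
        ((hasDerivAt_id x).const_mul c')).neg).congr_deriv (by ring))
      (fun x hx => by linarith [hsmall x hx])
      (fun x hx => by linarith [hlb x (hsub hx)]) hp hδs hp.2
  have hPδ : 0 ≤ P δ :=
    mul_nonneg (div_nonneg hW.le (by linarith)) (Real.rpow_nonneg hδ.1.le _)
  refine ⟨|f δ| + P δ + c', by linarith [abs_nonneg (f δ)], fun p hp => ?_⟩
  show P p - _ ≤ |f p|
  rcases le_total p δ with hpδ | hδp
  · have := hcomp p ⟨hp.1, hpδ⟩
    have htri := abs_sub (f δ) (f p)
    linarith [mul_nonneg hc' hp.1.le, mul_le_of_le_one_right hc' hδ.2.le]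
  · have : P p ≤ P δ := mul_le_mul_of_nonneg_left
      (Real.rpow_le_rpow_of_nonpos hδ.1 hδp (by linarith)) (div_nonneg hW.le (by linarith))
    linarith [abs_nonneg (f p), abs_nonneg (f δ)]

end PowerBounds

theorem ContDiffOn.hasDerivAt_iteratedDerivWithin {φ : ℝ → ℝ} {s : Set ℝ} {n : ℕ}
    (hφ : ContDiffOn ℝ (n + 1) φ s) (hs : IsOpen s) {x : ℝ} (hx : x ∈ s) :
    HasDerivAt (iteratedDerivWithin n φ s) (iteratedDerivWithin (n + 1) φ s x) x := by
  have hdiff := (hφ.differentiableOn_iteratedDerivWithin (by exact_mod_cast n.lt_succ_self)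
    hs.uniqueDiffOn x hx).differentiableAt (hs.mem_nhds hx)
  rw [iteratedDerivWithin_succ, derivWithin_of_isOpen hs hx]
  exact hdiff.hasDerivAt

/-- If `φ` is `ℓ`-times continuously differentiable on `(0,1)` with `ℓ`th
divergence speed `p^α` and `ℓ > 1 + α`, then the `(ℓ-1)`th divergence speed of `φ`
is also `p^α`. -/
theorem divergence_speed_lower_order (ℓ : ℕ) (α : ℝ) (hℓα : 1 + α < (ℓ : ℝ))
    (φ : ℝ → ℝ) (hφ : ContDiffOn ℝ ℓ φ (Set.Ioo 0 1))
    (W c c' : ℝ) (hW : 0 < W) (hc : 0 ≤ c) (hc' : 0 ≤ c')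
    (hub : ∀ p ∈ Set.Ioo (0:ℝ) 1,
      |iteratedDerivWithin ℓ φ (Set.Ioo 0 1) p| ≤ W * p ^ (α - ℓ) + c)
    (hlb : ∀ p ∈ Set.Ioo (0:ℝ) 1,
      W * p ^ (α - ℓ) - c' ≤ |iteratedDerivWithin ℓ φ (Set.Ioo 0 1) p|) :
    ∃ W₁ c₁ c₁' : ℝ, 0 < W₁ ∧ 0 ≤ c₁ ∧ 0 ≤ c₁' ∧
      ∀ p ∈ Set.Ioo (0:ℝ) 1,
        W₁ * p ^ (α - ((ℓ - 1 : ℕ) : ℝ)) - c₁'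
            ≤ |iteratedDerivWithin (ℓ - 1) φ (Set.Ioo 0 1) p| ∧
        |iteratedDerivWithin (ℓ - 1) φ (Set.Ioo 0 1) p|
            ≤ W₁ * p ^ (α - ((ℓ - 1 : ℕ) : ℝ)) + c₁ := by
  obtain _ | m := ℓ
  -- `0 - 1 = 0` in `ℕ`, so for `ℓ = 0` the conclusion is the hypothesis.
  · exact ⟨W, c, c', hW, hc, hc', fun p hp => ⟨hlb p hp, hub p hp⟩⟩
  have hr : α - ((m + 1 : ℕ) : ℝ) < -1 := by push_cast at hℓα ⊢; linarith
  have hderiv := fun x (hx : x ∈ Ioo (0 : ℝ) 1) =>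
    ContDiffOn.hasDerivAt_iteratedDerivWithin (by exact_mod_cast hφ) isOpen_Ioo hx
  have hcont := hφ.continuousOn_iteratedDerivWithin le_rfl isOpen_Ioo.uniqueDiffOn
  obtain ⟨C, hC, hupper⟩ := abs_le_div_neg_mul_rpow_add_one_add hr hW.le hc hderiv hub
  obtain ⟨C', hC', hlower⟩ := div_neg_mul_rpow_add_one_sub_le_abs hr hW hc' hderiv hcont hlb
  have hexp : α - ((m + 1 - 1 : ℕ) : ℝ) = α - ((m + 1 : ℕ) : ℝ) + 1 := by push_cast; ring
  refine ⟨W / -(α - ((m + 1 : ℕ) : ℝ) + 1), C, C', div_pos hW (by linarith), hC, hC',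
    fun p hp => ?_⟩
  rw [hexp]
  exact ⟨hlower p hp, hupper p hp⟩
end

section
/- Let α be a positive integer and let φ : [0,1] → ℝ be (α+1)-times continuously differentiable on (0,1) such that there exist W > 0, c ≥ 0, c' ≥ 0 with W p^{-1} - c' ≤ |φ^{(α+1)}(p)| ≤ W p^{-1} + c for all p ∈ (0,1). Then there exist constants W_α > 0, c_α ≥ 0, c'_α ≥ 0 such that W_α ln(1/p) - c'_α ≤ |φ^{(α)}(p)| ≤ W_α ln(1/p) + c_α for all p ∈ (0,1). -/
/-!
Near `0` the bound `|φ^{(α+1)}(p)| ≥ W p⁻¹ - c'` keeps `φ^{(α+1)}` away from zero, so by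
connectedness it has a constant sign `ε`. Then `ε φ^{(α)} - W log` has derivative
`|φ^{(α+1)}(p)| - W p⁻¹ ∈ [-c', c]`, hence is bounded near `0` by the mean value theorem.
Away from `0` the derivative `φ^{(α+1)}` is bounded, hence so is `φ^{(α)}`.
-/

open Set Real

theorem ContDiffOn.hasDerivWithinAt_iteratedDerivWithin {𝕜 F : Type*} [NontriviallyNormedField 𝕜]
    [NormedAddCommGroup F] [NormedSpace 𝕜 F] {n : ℕ} {φ : 𝕜 → F} {s : Set 𝕜}
    (h : ContDiffOn 𝕜 (n + 1) φ s) (hs : UniqueDiffOn 𝕜 s) {x : 𝕜} (hx : x ∈ s) :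
    HasDerivWithinAt (iteratedDerivWithin n φ s) (iteratedDerivWithin (n + 1) φ s x) s x := by
  rw [iteratedDerivWithin_succ]
  exact (h.differentiableOn_iteratedDerivWithin (by exact_mod_cast n.lt_succ_self) hs x
    hx).hasDerivWithinAt

theorem IsPreconnected.exists_abs_eq_mul {X : Type*} [TopologicalSpace X] {S : Set X}
    (hS : IsPreconnected S) {g : X → ℝ} (hg : ContinuousOn g S) (hg0 : ∀ x ∈ S, g x ≠ 0) :
    ∃ ε : ℝ, |ε| = 1 ∧ ∀ x ∈ S, |g x| = ε * g x := by
  rcases hS.eq_or_eq_neg_of_sq_eq hg.abs hg (fun x _ ↦ sq_abs (g x)) (hg0 _) with h | h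
  · exact ⟨1, abs_one, fun x hx ↦ by simpa using h hx⟩
  · exact ⟨-1, by simp, fun x hx ↦ by simpa using h hx⟩

theorem exists_forall_lt_mul_inv {W c : ℝ} (hW : 0 < W) (hc : 0 ≤ c) :
    ∃ t₀ ∈ Ioo (0 : ℝ) 1, ∀ x ∈ Ioc 0 t₀, c < W * x⁻¹ := by
  have hpos : 0 < W + c + 1 := by linarith
  refine ⟨W / (W + c + 1), ⟨by positivity, (div_lt_one hpos).2 (by linarith)⟩, fun x hx ↦ ?_⟩
  calc c < W + c + 1 := by linarith
    _ = W * (W / (W + c + 1))⁻¹ := by field_simp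
    _ ≤ W * x⁻¹ := by gcongr; exacts [hx.1, hx.2]

theorem abs_le_add_of_abs_deriv_le {f g : ℝ → ℝ} {a b K : ℝ} (hab : a < b)
    (hf : ∀ x ∈ Ico a b, HasDerivWithinAt f (g x) (Ico a b) x) (hg : ∀ x ∈ Ico a b, |g x| ≤ K)
    {p : ℝ} (hp : p ∈ Ico a b) : |f p| ≤ |f a| + K * (b - a) := by
  have ha : a ∈ Ico a b := left_mem_Ico.2 hab
  have hK : 0 ≤ K := (abs_nonneg _).trans (hg a ha)
  have hlip := (convex_Ico a b).norm_image_sub_le_of_norm_hasDerivWithin_le hf hg ha hp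
  rw [Real.norm_eq_abs, Real.norm_eq_abs, abs_of_nonneg (sub_nonneg.2 hp.1)] at hlip
  calc |f p| ≤ |f a| + |f p - f a| := by linarith [abs_sub_abs_le_abs_sub (f p) (f a)]
    _ ≤ |f a| + K * (b - a) := by gcongr; exact hlip.trans (by gcongr; exact hp.2.le)

theorem abs_sub_mul_log_le_of_abs_deriv_sub_le {F F' : ℝ → ℝ} {W K t₀ : ℝ} (ht₀ : 0 < t₀)
    (hF : ∀ x ∈ Ioc 0 t₀, HasDerivWithinAt F (F' x) (Ioc 0 t₀) x)
    (hF' : ∀ x ∈ Ioc 0 t₀, |F' x - W * x⁻¹| ≤ K) {p : ℝ} (hp : p ∈ Ioc 0 t₀) :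
    |F p - W * log p| ≤ |F t₀ - W * log t₀| + K * t₀ := by
  have ht : t₀ ∈ Ioc 0 t₀ := right_mem_Ioc.2 ht₀
  have hK : 0 ≤ K := (abs_nonneg _).trans (hF' t₀ ht)
  have hlip := (convex_Ioc 0 t₀).norm_image_sub_le_of_norm_hasDerivWithin_le
    (f := fun x ↦ F x - W * log x) (fun x hx ↦ (hF x hx).sub
      ((hasDerivAt_log hx.1.ne').const_mul W).hasDerivWithinAt) hF' ht hp
  rw [Real.norm_eq_abs, Real.norm_eq_abs, abs_of_nonpos (sub_nonpos.2 hp.2)] at hlip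
  calc |F p - W * log p|
      ≤ |F t₀ - W * log t₀| + |(F p - W * log p) - (F t₀ - W * log t₀)| :=
        by linarith [abs_sub_abs_le_abs_sub (F p - W * log p) (F t₀ - W * log t₀)]
    _ ≤ |F t₀ - W * log t₀| + K * t₀ := by gcongr; exact hlip.trans (by gcongr; linarith [hp.1])

theorem exists_abs_abs_sub_mul_log_le {f g : ℝ → ℝ} {W c c' t₀ : ℝ} (ht₀ : 0 < t₀)
    (ht₀1 : t₀ ≤ 1) (hW : 0 ≤ W) (hf : ∀ x ∈ Ioc 0 t₀, HasDerivWithinAt f (g x) (Ioc 0 t₀) x)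
    (hg : ContinuousOn g (Ioc 0 t₀)) (hg0 : ∀ x ∈ Ioc 0 t₀, g x ≠ 0)
    (hub : ∀ x ∈ Ioc 0 t₀, |g x| ≤ W * x⁻¹ + c) (hlb : ∀ x ∈ Ioc 0 t₀, W * x⁻¹ - c' ≤ |g x|) :
    ∃ C, 0 ≤ C ∧ ∀ p ∈ Ioc 0 t₀, |(|f p| - W * log (1 / p))| ≤ C := by
  obtain ⟨ε, hε, hεg⟩ := isPreconnected_Ioc.exists_abs_eq_mul hg hg0
  have hbound (p : ℝ) (hp : p ∈ Ioc 0 t₀) := abs_sub_mul_log_le_of_abs_deriv_sub_le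
    (F := fun x ↦ ε * f x) (W := W) (K := max c c') ht₀ (fun x hx ↦ (hf x hx).const_mul ε)
    (fun x hx ↦ by
      rw [← hεg x hx, abs_sub_le_iff]
      constructor <;> linarith [hub x hx, hlb x hx, le_max_left c c', le_max_right c c']) hp
  refine ⟨_, (abs_nonneg _).trans (hbound t₀ (right_mem_Ioc.2 ht₀)), fun p hp ↦ ?_⟩
  have hlog : W * log p ≤ 0 :=
    mul_nonpos_of_nonneg_of_nonpos hW (log_nonpos hp.1.le (hp.2.trans ht₀1))
  have hεf : |ε * f p| = |f p| := by rw [abs_mul, hε, one_mul]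
  rw [one_div, log_inv, mul_neg, sub_neg_eq_add]
  calc |(|f p| + W * log p)| ≤ |ε * f p - W * log p| := by
        rw [← hεf, abs_le]
        constructor <;> linarith [abs_sub_abs_le_abs_sub (ε * f p) (W * log p),
          abs_sub_abs_le_abs_sub (W * log p) (ε * f p), abs_sub_comm (ε * f p) (W * log p),
          abs_of_nonpos hlog]
    _ ≤ _ := hbound p hp

theorem divergence_speed_log_general (α : ℕ) (φ : ℝ → ℝ)
    (hφ : ContDiffOn ℝ (α + 1) φ (Set.Ioo 0 1))
    (W c c' : ℝ) (hW : 0 < W) (hc' : 0 ≤ c')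
    (hub : ∀ p ∈ Set.Ioo (0:ℝ) 1,
      |iteratedDerivWithin (α + 1) φ (Set.Ioo 0 1) p| ≤ W * p⁻¹ + c)
    (hlb : ∀ p ∈ Set.Ioo (0:ℝ) 1,
      W * p⁻¹ - c' ≤ |iteratedDerivWithin (α + 1) φ (Set.Ioo 0 1) p|) :
    ∃ Wα cα cα' : ℝ, 0 < Wα ∧ 0 ≤ cα ∧ 0 ≤ cα' ∧
      ∀ p ∈ Set.Ioo (0:ℝ) 1,
        Wα * Real.log (1 / p) - cα' ≤ |iteratedDerivWithin α φ (Set.Ioo 0 1) p| ∧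
        |iteratedDerivWithin α φ (Set.Ioo 0 1) p| ≤ Wα * Real.log (1 / p) + cα := by
  set f := iteratedDerivWithin α φ (Ioo 0 1)
  set g := iteratedDerivWithin (α + 1) φ (Ioo 0 1)
  have hf (x : ℝ) (hx : x ∈ Ioo 0 1) : HasDerivWithinAt f (g x) (Ioo 0 1) x :=
    hφ.hasDerivWithinAt_iteratedDerivWithin isOpen_Ioo.uniqueDiffOn hx
  have hg : ContinuousOn g (Ioo 0 1) :=
    hφ.continuousOn_iteratedDerivWithin le_rfl isOpen_Ioo.uniqueDiffOn
  obtain ⟨t₀, ht₀, hsmall⟩ := exists_forall_lt_mul_inv hW hc'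
  have hnear : Ioc 0 t₀ ⊆ Ioo 0 1 := Ioc_subset_Ioo_right ht₀.2
  have hfar : Ico t₀ 1 ⊆ Ioo 0 1 := Ico_subset_Ioo_left ht₀.1
  obtain ⟨C₀, hC₀, hf_near⟩ := exists_abs_abs_sub_mul_log_le ht₀.1 ht₀.2.le hW.le
    (fun x hx ↦ (hf x (hnear hx)).mono hnear) (hg.mono hnear)
    (fun x hx ↦ abs_pos.1 ((sub_pos.2 (hsmall x hx)).trans_le (hlb x (hnear hx))))
    (fun x hx ↦ hub x (hnear hx)) (fun x hx ↦ hlb x (hnear hx))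
  have hf_far (p : ℝ) (hp : p ∈ Ico t₀ 1) : |f p| ≤ |f t₀| + (W * t₀⁻¹ + c) * (1 - t₀) :=
    abs_le_add_of_abs_deriv_le ht₀.2 (fun x hx ↦ (hf x (hfar hx)).mono hfar)
      (fun x hx ↦ (hub x (hfar hx)).trans (by gcongr; exacts [ht₀.1, hx.1])) hp
  have hC₁ := (abs_nonneg _).trans (hf_far t₀ (left_mem_Ico.2 ht₀.2))
  have hlog_t₀ : 0 ≤ W * log (1 / t₀) :=
    mul_nonneg hW.le (log_nonneg (by rw [le_div_iff₀ ht₀.1]; linarith [ht₀.2]))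
  refine ⟨W, C₀ + (|f t₀| + (W * t₀⁻¹ + c) * (1 - t₀)), C₀ + W * log (1 / t₀), hW,
    add_nonneg hC₀ hC₁, add_nonneg hC₀ hlog_t₀, fun p hp ↦ ?_⟩
  rcases le_or_gt p t₀ with hpt | hpt
  · have := abs_le.1 (hf_near p ⟨hp.1, hpt⟩)
    constructor <;> linarith
  · have hlog_p : 0 ≤ W * log (1 / p) :=
      mul_nonneg hW.le (log_nonneg (by rw [le_div_iff₀ hp.1]; linarith [hp.2]))
    have hlog_le : W * log (1 / p) ≤ W * log (1 / t₀) := mul_le_mul_of_nonneg_left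
      (log_le_log (one_div_pos.2 hp.1) (one_div_le_one_div_of_le ht₀.1 hpt.le)) hW.le
    have := hf_far p ⟨hpt.le, hp.2⟩
    constructor <;> linarith [abs_nonneg (f p)]

/-- If `φ` is `(α+1)`-times continuously differentiable on `(0,1)` for a
positive integer `α`, with `W p⁻¹ - c' ≤ |φ^{(α+1)}(p)| ≤ W p⁻¹ + c`, then the `α`th
derivative diverges logarithmically:
`W_α log(1/p) - c'_α ≤ |φ^{(α)}(p)| ≤ W_α log(1/p) + c_α`. -/
theorem divergence_speed_log (α : ℕ) (hα : 0 < α) (φ : ℝ → ℝ)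
    (hφ : ContDiffOn ℝ (α + 1) φ (Set.Ioo 0 1))
    (W c c' : ℝ) (hW : 0 < W) (hc : 0 ≤ c) (hc' : 0 ≤ c')
    (hub : ∀ p ∈ Set.Ioo (0:ℝ) 1,
      |iteratedDerivWithin (α + 1) φ (Set.Ioo 0 1) p| ≤ W * p⁻¹ + c)
    (hlb : ∀ p ∈ Set.Ioo (0:ℝ) 1,
      W * p⁻¹ - c' ≤ |iteratedDerivWithin (α + 1) φ (Set.Ioo 0 1) p|) :
    ∃ Wα cα cα' : ℝ, 0 < Wα ∧ 0 ≤ cα ∧ 0 ≤ cα' ∧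
      ∀ p ∈ Set.Ioo (0:ℝ) 1,
        Wα * Real.log (1 / p) - cα' ≤ |iteratedDerivWithin α φ (Set.Ioo 0 1) p| ∧
        |iteratedDerivWithin α φ (Set.Ioo 0 1) p| ≤ Wα * Real.log (1 / p) + cα :=
  divergence_speed_log_general α φ hφ W c c' hW hc' hub hlb
end

section
/- Suppose φ : [0,1] → ℝ is continuously differentiable on (0,1) with |φ'(p)| ≤ W ln(1/p) + c for all p ∈ (0,1) and some constants W > 0, c ≥ 0. Then φ is β-Hölder continuous on [0,1] for every β ∈ (0,1); moreover one may take the Hölder constant to be W·Γ(1 + 1/(1-β))^{1-β} + c. -/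
/-!
By the fundamental theorem of calculus, `|φ b - φ a| ≤ ∫ p in a..b, W * (-log p) + c`.
Hölder's inequality with exponents `q = 1 / (1 - β)` and `1 / β` bounds `∫ p in a..b, -log p`
by `(∫ p in 0..1, (-log p) ^ q) ^ (1 - β) * (b - a) ^ β`, and the substitution `p = exp (-t)`
identifies the last integral with `Γ(q + 1)`. The constant term contributes
`c * (b - a) ≤ c * (b - a) ^ β`.
-/

open Set MeasureTheory Real

lemma image_exp_neg_Ioi_zero : (fun t : ℝ => exp (-t)) '' Ioi 0 = Ioo 0 1 := by
  ext p
  constructor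
  · rintro ⟨t, ht, rfl⟩
    exact ⟨exp_pos _, exp_lt_one_iff.mpr (neg_lt_zero.mpr ht)⟩
  · intro hp
    exact ⟨-log p, neg_pos.mpr (log_neg hp.1 hp.2), by simp [exp_log hp.1]⟩

lemma hasDerivWithinAt_exp_neg (s : Set ℝ) (t : ℝ) :
    HasDerivWithinAt (fun t : ℝ => exp (-t)) (-exp (-t)) s t := by
  simpa using ((hasDerivAt_neg t).exp).hasDerivWithinAt

lemma eqOn_abs_neg_exp_smul_neg_log_rpow (q : ℝ) :
    EqOn (fun t => |-exp (-t)| • (-log (exp (-t))) ^ q) (fun t => exp (-t) * t ^ (q + 1 - 1))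
      (Ioi 0) := by
  intro t _
  simp [abs_of_pos (exp_pos _)]

lemma integrableOn_neg_log_rpow {q : ℝ} (hq : -1 < q) :
    IntegrableOn (fun p => (-log p) ^ q) (Ioo 0 1) := by
  rw [← image_exp_neg_Ioi_zero, integrableOn_image_iff_integrableOn_abs_deriv_smul
    measurableSet_Ioi (fun t _ => hasDerivWithinAt_exp_neg _ t)
    (exp_injective.comp neg_injective).injOn]
  exact (GammaIntegral_convergent (by linarith)).congr_fun
    (eqOn_abs_neg_exp_smul_neg_log_rpow q).symm measurableSet_Ioi

lemma integral_neg_log_rpow {q : ℝ} (hq : -1 < q) :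
    ∫ p in Ioo 0 1, (-log p) ^ q = Gamma (q + 1) := by
  rw [← image_exp_neg_Ioi_zero, integral_image_eq_integral_abs_deriv_smul
    measurableSet_Ioi (fun t _ => hasDerivWithinAt_exp_neg _ t)
    (exp_injective.comp neg_injective).injOn,
    Gamma_eq_integral (by linarith)]
  exact setIntegral_congr_fun measurableSet_Ioi (eqOn_abs_neg_exp_smul_neg_log_rpow q)

lemma integral_le_integral_rpow_mul_measureReal_univ {α : Type*} [MeasurableSpace α]
    {μ : Measure α} [IsFiniteMeasure μ] {f : α → ℝ} {q : ℝ} (hq : 1 < q) (hf : 0 ≤ᵐ[μ] f)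
    (hfm : AEStronglyMeasurable f μ) (hfq : Integrable (fun x => f x ^ q) μ) :
    ∫ x, f x ∂μ ≤ (∫ x, f x ^ q ∂μ) ^ (1 / q) * μ.real univ ^ (1 - 1 / q) := by
  have hpq := HolderConjugate.conjExponent hq
  have hfLp : MemLp f (ENNReal.ofReal q) μ := by
    rw [← integrable_norm_rpow_iff hfm (by simp; linarith) ENNReal.ofReal_ne_top,
      ENNReal.toReal_ofReal (by linarith)]
    refine hfq.congr ?_
    filter_upwards [hf] with x hx
    rw [norm_of_nonneg hx]
  have h := integral_mul_le_Lp_mul_Lq_of_nonneg hpq hf (ae_of_all _ fun _ => zero_le_one)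
    hfLp (memLp_const 1)
  simpa [one_div, hpq.one_sub_inv] using h

lemma integral_neg_log_le {q a b : ℝ} (hq : 1 < q) (ha : 0 ≤ a) (hab : a ≤ b) (hb : b ≤ 1) :
    ∫ p in a..b, -log p ≤ Gamma (q + 1) ^ (1 / q) * (b - a) ^ (1 - 1 / q) := by
  have hsub : Ioo a b ⊆ Ioo 0 1 := Ioo_subset_Ioo ha hb
  have hnonneg : ∀ p ∈ Ioo (0 : ℝ) 1, 0 ≤ -log p := fun p hp =>
    neg_nonneg.mpr (log_nonpos hp.1.le hp.2.le)
  have hlogq : ∫ p in Ioo a b, (-log p) ^ q ≤ Gamma (q + 1) := by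
    rw [← integral_neg_log_rpow (by linarith : -1 < q)]
    refine setIntegral_mono_set (integrableOn_neg_log_rpow (by linarith)) ?_ hsub.eventuallyLE
    filter_upwards [ae_restrict_mem measurableSet_Ioo] with p hp
    exact rpow_nonneg (hnonneg p hp) q
  rw [intervalIntegral.integral_of_le hab, integral_Ioc_eq_integral_Ioo]
  calc ∫ p in Ioo a b, -log p
      ≤ (∫ p in Ioo a b, (-log p) ^ q) ^ (1 / q) *
          (volume.restrict (Ioo a b)).real univ ^ (1 - 1 / q) := by
        refine integral_le_integral_rpow_mul_measureReal_univ hq ?_ ?_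
          ((integrableOn_neg_log_rpow (by linarith)).mono_set hsub)
        · filter_upwards [ae_restrict_mem measurableSet_Ioo] with p hp
          exact hnonneg p (hsub hp)
        · exact measurable_log.neg.aestronglyMeasurable
    _ ≤ Gamma (q + 1) ^ (1 / q) * (b - a) ^ (1 - 1 / q) := by
        rw [measureReal_restrict_apply_univ, Real.volume_real_Ioo_of_le hab]
        gcongr
        exact setIntegral_nonneg measurableSet_Ioo fun p hp => rpow_nonneg (hnonneg p (hsub hp)) q

lemma abs_sub_le_integral_of_abs_deriv_le {f f' g : ℝ → ℝ} {a b : ℝ} (hab : a ≤ b)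
    (hf : ContinuousOn f (Icc a b)) (hderiv : ∀ x ∈ Ioo a b, HasDerivAt f (f' x) x)
    (hg : IntegrableOn g (Icc a b)) (hbound : ∀ x ∈ Ioo a b, |f' x| ≤ g x) :
    |f b - f a| ≤ ∫ x in a..b, g x := by
  rw [abs_sub_le_iff]
  constructor
  · exact intervalIntegral.sub_le_integral_of_hasDeriv_right_of_le hab hf
      (fun x hx => (hderiv x hx).hasDerivWithinAt) hg
      fun x hx => (le_abs_self _).trans (hbound x hx)
  · have h := intervalIntegral.sub_le_integral_of_hasDeriv_right_of_le hab hf.neg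
      (fun x hx => (hderiv x hx).neg.hasDerivWithinAt) hg
      fun x hx => (neg_le_abs _).trans (hbound x hx)
    simp only [Pi.neg_apply] at h
    linarith

lemma abs_sub_le_of_abs_deriv_le_log {W c β a b : ℝ} {φ φ' : ℝ → ℝ} (hW : 0 ≤ W) (hc : 0 ≤ c)
    (hβ : β ∈ Ioo 0 1) (ha : 0 ≤ a) (hab : a ≤ b) (hb : b ≤ 1)
    (hcont : ContinuousOn φ (Icc a b)) (hderiv : ∀ p ∈ Ioo a b, HasDerivAt φ (φ' p) p)
    (hbound : ∀ p ∈ Ioo a b, |φ' p| ≤ W * log (1 / p) + c) :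
    |φ b - φ a| ≤ (W * Gamma (1 + 1 / (1 - β)) ^ (1 - β) + c) * (b - a) ^ β := by
  set q := 1 / (1 - β)
  have hq : 1 < q := by
    rw [lt_div_iff₀ (by linarith [hβ.2])]
    linarith [hβ.1]
  have hq_inv : 1 / q = 1 - β := one_div_one_div _
  have hlog : IntervalIntegrable (fun p => -log p) volume a b :=
    intervalIntegral.intervalIntegrable_log'.neg
  have hdom : IntegrableOn (fun p => W * -log p + c) (Icc a b) :=
    (intervalIntegrable_iff_integrableOn_Icc_of_le hab).mp
      ((hlog.const_mul W).add intervalIntegrable_const)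
  calc |φ b - φ a| ≤ ∫ p in a..b, (W * -log p + c) :=
        abs_sub_le_integral_of_abs_deriv_le hab hcont hderiv hdom fun p hp => by
          simpa only [one_div, log_inv] using hbound p hp
    _ = W * (∫ p in a..b, -log p) + c * (b - a) := by
        rw [intervalIntegral.integral_add (hlog.const_mul W) intervalIntegrable_const,
          intervalIntegral.integral_const_mul, intervalIntegral.integral_const, smul_eq_mul,
          mul_comm (b - a)]
    _ ≤ W * (Gamma (q + 1) ^ (1 / q) * (b - a) ^ (1 - 1 / q)) + c * (b - a) ^ β := by
        gcongr
        · exact integral_neg_log_le hq ha hab hb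
        · exact self_le_rpow_of_le_one (by linarith) (by linarith) hβ.2.le
    _ = (W * Gamma (1 + 1 / (1 - β)) ^ (1 - β) + c) * (b - a) ^ β := by
        rw [hq_inv, sub_sub_cancel, add_comm q]
        ring

theorem holder_of_log_derivative_bound_general (W c : ℝ) (hW : 0 < W) (hc : 0 ≤ c)
    (φ φ' : ℝ → ℝ)
    (hcont : ContinuousOn φ (Set.Icc 0 1))
    (hderiv : ∀ p ∈ Set.Ioo (0:ℝ) 1, HasDerivAt φ (φ' p) p)
    (hbound : ∀ p ∈ Set.Ioo (0:ℝ) 1, |φ' p| ≤ W * Real.log (1 / p) + c) :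
    ∀ β ∈ Set.Ioo (0:ℝ) 1, ∀ x ∈ Set.Icc (0:ℝ) 1, ∀ y ∈ Set.Icc (0:ℝ) 1,
      |φ x - φ y| ≤ (W * (Real.Gamma (1 + 1 / (1 - β))) ^ (1 - β) + c) * |x - y| ^ β := by
  intro β hβ x hx y hy
  have key : ∀ a ∈ Icc (0 : ℝ) 1, ∀ b ∈ Icc (0 : ℝ) 1, a ≤ b →
      |φ b - φ a| ≤ (W * Gamma (1 + 1 / (1 - β)) ^ (1 - β) + c) * (b - a) ^ β :=
    fun a ha b hb hab => abs_sub_le_of_abs_deriv_le_log hW.le hc hβ ha.1 hab hb.2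
      (hcont.mono (Icc_subset_Icc ha.1 hb.2))
      (fun p hp => hderiv p (Ioo_subset_Ioo ha.1 hb.2 hp))
      (fun p hp => hbound p (Ioo_subset_Ioo ha.1 hb.2 hp))
  rcases le_total y x with hyx | hxy
  · rw [abs_of_nonneg (sub_nonneg.mpr hyx)]
    exact key y hy x hx hyx
  · rw [abs_sub_comm, abs_sub_comm x, abs_of_nonneg (sub_nonneg.mpr hxy)]
    exact key x hx y hy hxy

/-- If `φ` is continuous on `[0,1]`, continuously differentiable on `(0,1)`
with `|φ'(p)| ≤ W log(1/p) + c`, then `φ` is `β`-Hölder continuous on `[0,1]` for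
every `β ∈ (0,1)`, with Hölder constant `W · Γ(1 + 1/(1-β))^(1-β) + c`. -/
theorem holder_of_log_derivative_bound (W c : ℝ) (hW : 0 < W) (hc : 0 ≤ c)
    (φ φ' : ℝ → ℝ)
    (hcont : ContinuousOn φ (Set.Icc 0 1))
    (hderiv : ∀ p ∈ Set.Ioo (0:ℝ) 1, HasDerivAt φ (φ' p) p)
    (hderivcont : ContinuousOn φ' (Set.Ioo 0 1))
    (hbound : ∀ p ∈ Set.Ioo (0:ℝ) 1, |φ' p| ≤ W * Real.log (1 / p) + c) :
    ∀ β ∈ Set.Ioo (0:ℝ) 1, ∀ x ∈ Set.Icc (0:ℝ) 1, ∀ y ∈ Set.Icc (0:ℝ) 1,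
      |φ x - φ y| ≤ (W * (Real.Gamma (1 + 1 / (1 - β))) ^ (1 - β) + c) * |x - y| ^ β :=
  holder_of_log_derivative_bound_general W c hW hc φ φ' hcont hderiv hbound
end

section
/- Suppose φ : [0,1] → ℝ is twice continuously differentiable on (0,1) with φ'(0) = 0 (interpreted as lim_{p↓0} φ'(p) = 0) and there exist constants W > 0, c ≥ 0 such that |φ''(p)| ≤ W p^{α-2} + c for all p ∈ (0,1), where α ∈ (1,2). Then φ is Lipschitz continuous on [0,1] and φ' is (α-1)-Hölder continuous on (0,1). -/
/-!
For `0 < y ≤ x < 1`, comparing `φ'` with a primitive of the bound on `φ''` gives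
`|φ' x - φ' y| ≤ (W/s) (x^s - y^s) + c (x - y)` with `s = α - 1 ∈ (0,1)`; subadditivity of
`t ↦ t^s` and `x - y ≤ (x - y)^s` turn this into the Hölder estimate with constant `W/s + c`.
Letting `y ↓ 0` and using `φ'(0+) = 0` bounds `φ'` by the same constant, and the mean value
theorem then makes `φ` Lipschitz on `[0,1]`.
-/

open Set Filter Topology

namespace Real

theorem rpow_sub_rpow_le_rpow_sub {x y s : ℝ} (hy : 0 ≤ y) (hyx : y ≤ x) (hs₀ : 0 ≤ s)
    (hs₁ : s ≤ 1) : x ^ s - y ^ s ≤ (x - y) ^ s := by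
  have := rpow_add_le_add_rpow (sub_nonneg.2 hyx) hy hs₀ hs₁
  rw [sub_add_cancel] at this
  linarith

end Real

section HolderOfDerivBound

variable {E : Type*} [NormedAddCommGroup E] [NormedSpace ℝ E] {f f' : ℝ → E} {W c s x y : ℝ}

theorem norm_sub_le_of_norm_deriv_le_mul_rpow_add (hs : 0 < s) (hy : 0 < y) (hyx : y ≤ x)
    (hf : ∀ t ∈ Icc y x, HasDerivAt f (f' t) t)
    (hbound : ∀ t ∈ Icc y x, ‖f' t‖ ≤ W * t ^ (s - 1) + c) :
    ‖f x - f y‖ ≤ W / s * (x ^ s - y ^ s) + c * (x - y) := by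
  have hB : ∀ t ∈ Icc y x, HasDerivAt (fun u => W / s * (u ^ s - y ^ s) + c * (u - y))
      (W * t ^ (s - 1) + c) t := by
    intro t ht
    have hpow := Real.hasDerivAt_rpow_const (p := s) (Or.inl (hy.trans_le ht.1).ne')
    refine (((hpow.sub_const (y ^ s)).const_mul (W / s)).add
      (((hasDerivAt_id t).sub_const y).const_mul c)).congr_deriv ?_
    field_simp
  refine image_norm_le_of_norm_deriv_right_le_deriv_boundary' (f := fun u => f u - f y)
    (fun t ht => ((hf t ht).sub_const _).continuousAt.continuousWithinAt)
    (fun t ht => ((hf t (Ico_subset_Icc_self ht)).sub_const _).hasDerivWithinAt)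
    (by simp) (fun t ht => (hB t ht).continuousAt.continuousWithinAt)
    (fun t ht => (hB t (Ico_subset_Icc_self ht)).hasDerivWithinAt)
    (fun t ht => hbound t (Ico_subset_Icc_self ht)) ⟨hyx, le_rfl⟩

theorem norm_sub_le_mul_rpow_of_norm_deriv_le_mul_rpow_add (hW : 0 ≤ W) (hc : 0 ≤ c)
    (hs₀ : 0 < s) (hs₁ : s ≤ 1) (hy : 0 < y) (hyx : y ≤ x) (hxy : x - y ≤ 1)
    (hf : ∀ t ∈ Icc y x, HasDerivAt f (f' t) t)
    (hbound : ∀ t ∈ Icc y x, ‖f' t‖ ≤ W * t ^ (s - 1) + c) :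
    ‖f x - f y‖ ≤ (W / s + c) * (x - y) ^ s := by
  have hpow : x ^ s - y ^ s ≤ (x - y) ^ s :=
    Real.rpow_sub_rpow_le_rpow_sub hy.le hyx hs₀.le hs₁
  have hlin : x - y ≤ (x - y) ^ s := Real.self_le_rpow_of_le_one (sub_nonneg.2 hyx) hxy hs₁
  calc ‖f x - f y‖ ≤ W / s * (x ^ s - y ^ s) + c * (x - y) :=
        norm_sub_le_of_norm_deriv_le_mul_rpow_add hs₀ hy hyx hf hbound
    _ ≤ W / s * (x - y) ^ s + c * (x - y) ^ s := by gcongr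
    _ = (W / s + c) * (x - y) ^ s := by ring

theorem norm_sub_le_mul_abs_sub_rpow_of_norm_deriv_le_mul_rpow_add (hW : 0 ≤ W) (hc : 0 ≤ c)
    (hs₀ : 0 < s) (hs₁ : s ≤ 1) (hf : ∀ t ∈ Ioo 0 1, HasDerivAt f (f' t) t)
    (hbound : ∀ t ∈ Ioo 0 1, ‖f' t‖ ≤ W * t ^ (s - 1) + c)
    (hx : x ∈ Ioo 0 1) (hy : y ∈ Ioo 0 1) :
    ‖f x - f y‖ ≤ (W / s + c) * |x - y| ^ s := by
  wlog hyx : y ≤ x generalizing x y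
  · rw [norm_sub_rev, abs_sub_comm]
    exact this hy hx (le_of_not_ge hyx)
  have hsub : Icc y x ⊆ Ioo 0 1 := Icc_subset_Ioo hy.1 hx.2
  rw [abs_of_nonneg (sub_nonneg.2 hyx)]
  exact norm_sub_le_mul_rpow_of_norm_deriv_le_mul_rpow_add hW hc hs₀ hs₁ hy.1 hyx
    (by linarith [hx.2, hy.1]) (fun t ht => hf t (hsub ht)) (fun t ht => hbound t (hsub ht))

end HolderOfDerivBound

theorem norm_le_mul_rpow_of_norm_sub_le_of_tendsto_nhdsGT_zero {E : Type*}
    [NormedAddCommGroup E] {g : ℝ → E} {C s x : ℝ} (hx : 0 < x)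
    (hg : Tendsto g (𝓝[>] 0) (𝓝 0)) (h : ∀ y ∈ Ioo 0 x, ‖g x - g y‖ ≤ C * (x - y) ^ s) :
    ‖g x‖ ≤ C * x ^ s := by
  have hlhs : Tendsto (fun y => ‖g x - g y‖) (𝓝[>] 0) (𝓝 ‖g x - 0‖) :=
    (tendsto_const_nhds.sub hg).norm
  have hrhs : ContinuousAt (fun y : ℝ => C * (x - y) ^ s) 0 :=
    continuousAt_const.mul ((continuousAt_const.sub continuousAt_id).rpow_const
      (Or.inl (by simpa using hx.ne')))
  simpa using le_of_tendsto_of_tendsto hlhs (hrhs.tendsto.mono_left nhdsWithin_le_nhds)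
    (mem_of_superset (Ioo_mem_nhdsGT hx) h)

theorem abs_sub_le_mul_abs_sub_of_abs_deriv_le {f f' : ℝ → ℝ} {a b C x y : ℝ}
    (hcont : ContinuousOn f (Icc a b)) (hf : ∀ t ∈ Ioo a b, HasDerivAt f (f' t) t)
    (hC : ∀ t ∈ Ioo a b, |f' t| ≤ C) (hx : x ∈ Icc a b) (hy : y ∈ Icc a b) :
    |f x - f y| ≤ C * |x - y| := by
  wlog hyx : y < x generalizing x y
  · rcases (not_lt.1 hyx).lt_or_eq with hxy | rfl
    · rw [abs_sub_comm, abs_sub_comm x]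
      exact this hy hx hxy
    · simp
  obtain ⟨t, ht, hslope⟩ := exists_hasDerivAt_eq_slope f f' hyx
    (hcont.mono (Icc_subset_Icc hy.1 hx.2)) fun t ht => hf t ⟨hy.1.trans_lt ht.1, ht.2.trans_le hx.2⟩
  rw [eq_div_iff (sub_ne_zero.2 hyx.ne')] at hslope
  rw [← hslope, abs_mul]
  exact mul_le_mul_of_nonneg_right (hC t ⟨hy.1.trans_lt ht.1, ht.2.trans_le hx.2⟩) (abs_nonneg _)

theorem lipschitz_and_holder_deriv_general (α : ℝ) (hα : α ∈ Set.Ioo (1:ℝ) 2)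
    (W c : ℝ) (hW : 0 < W) (hc : 0 ≤ c) (φ φ' φ'' : ℝ → ℝ)
    (hcont : ContinuousOn φ (Set.Icc 0 1))
    (hd1 : ∀ p ∈ Set.Ioo (0:ℝ) 1, HasDerivAt φ (φ' p) p)
    (hd2 : ∀ p ∈ Set.Ioo (0:ℝ) 1, HasDerivAt φ' (φ'' p) p)
    (hlim : Filter.Tendsto φ' (nhdsWithin 0 (Set.Ioi 0)) (nhds 0))
    (hbound : ∀ p ∈ Set.Ioo (0:ℝ) 1, |φ'' p| ≤ W * p ^ (α - 2) + c) :
    (∃ C > 0, ∀ x ∈ Set.Icc (0:ℝ) 1, ∀ y ∈ Set.Icc (0:ℝ) 1,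
        |φ x - φ y| ≤ C * |x - y|) ∧
    (∃ C > 0, ∀ x ∈ Set.Ioo (0:ℝ) 1, ∀ y ∈ Set.Ioo (0:ℝ) 1,
        |φ' x - φ' y| ≤ C * |x - y| ^ (α - 1)) := by
  obtain ⟨hα₁, hα₂⟩ := hα
  have hs₀ : 0 < α - 1 := by linarith
  have hC : 0 < W / (α - 1) + c := by positivity
  have hbound' : ∀ p ∈ Ioo (0:ℝ) 1, ‖φ'' p‖ ≤ W * p ^ (α - 1 - 1) + c := fun p hp => by
    simpa [sub_sub, one_add_one_eq_two] using hbound p hp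
  have holder : ∀ x ∈ Ioo (0:ℝ) 1, ∀ y ∈ Ioo (0:ℝ) 1,
      |φ' x - φ' y| ≤ (W / (α - 1) + c) * |x - y| ^ (α - 1) := fun x hx y hy =>
    norm_sub_le_mul_abs_sub_rpow_of_norm_deriv_le_mul_rpow_add hW.le hc hs₀ (by linarith)
      hd2 hbound' hx hy
  have hφ'_le : ∀ x ∈ Ioo (0:ℝ) 1, |φ' x| ≤ W / (α - 1) + c := fun x hx => by
    have hsmall := norm_le_mul_rpow_of_norm_sub_le_of_tendsto_nhdsGT_zero hx.1 hlim
      fun y hy => by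
        simpa [abs_of_pos (sub_pos.2 hy.2)] using holder x hx y ⟨hy.1, hy.2.trans hx.2⟩
    have hpow : x ^ (α - 1) ≤ 1 := Real.rpow_le_one hx.1.le hx.2.le hs₀.le
    calc |φ' x| ≤ (W / (α - 1) + c) * x ^ (α - 1) := hsmall
      _ ≤ W / (α - 1) + c := mul_le_of_le_one_right hC.le hpow
  exact ⟨⟨_, hC, fun x hx y hy => abs_sub_le_mul_abs_sub_of_abs_deriv_le hcont hd1 hφ'_le hx hy⟩,
    ⟨_, hC, holder⟩⟩

/-- If `φ` is twice continuously differentiable on `(0,1)` with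
`φ'(0) = 0` (as a right limit) and `|φ''(p)| ≤ W p^(α-2) + c` for `α ∈ (1,2)`,
then `φ` is Lipschitz on `[0,1]` and `φ'` is `(α-1)`-Hölder continuous on `(0,1)`. -/
theorem lipschitz_and_holder_deriv (α : ℝ) (hα : α ∈ Set.Ioo (1:ℝ) 2)
    (W c : ℝ) (hW : 0 < W) (hc : 0 ≤ c) (φ φ' φ'' : ℝ → ℝ)
    (hcont : ContinuousOn φ (Set.Icc 0 1))
    (hd1 : ∀ p ∈ Set.Ioo (0:ℝ) 1, HasDerivAt φ (φ' p) p)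
    (hd2 : ∀ p ∈ Set.Ioo (0:ℝ) 1, HasDerivAt φ' (φ'' p) p)
    (hd2cont : ContinuousOn φ'' (Set.Ioo 0 1))
    (hlim : Filter.Tendsto φ' (nhdsWithin 0 (Set.Ioi 0)) (nhds 0))
    (hbound : ∀ p ∈ Set.Ioo (0:ℝ) 1, |φ'' p| ≤ W * p ^ (α - 2) + c) :
    (∃ C > 0, ∀ x ∈ Set.Icc (0:ℝ) 1, ∀ y ∈ Set.Icc (0:ℝ) 1,
        |φ x - φ y| ≤ C * |x - y|) ∧
    (∃ C > 0, ∀ x ∈ Set.Ioo (0:ℝ) 1, ∀ y ∈ Set.Ioo (0:ℝ) 1,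
        |φ' x - φ' y| ≤ C * |x - y| ^ (α - 1)) :=
  lipschitz_and_holder_deriv_general α hα W c hW hc φ φ' φ'' hcont hd1 hd2 hlim hbound
end

section
/- Let X_1,...,X_n be i.i.d. samples from a distribution on {1,...,k}, let N_i = #{j : X_j = i} be the histogram, and suppose φ : [0,1] → ℝ is Lipschitz continuous with constant M. Then Var[∑_{i=1}^k φ(N_i/n)] ≤ M²/n. -/
open Finset

/-- Expectation of a function of `n` i.i.d. samples from a distribution `p` on `Fin k`. -/
noncomputable def iidExpect (k n : ℕ) (p : Fin k → ℝ) (f : (Fin n → Fin k) → ℝ) : ℝ :=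
  ∑ x : Fin n → Fin k, (∏ j, p (x j)) * f x

/-- Histogram: `histCount x i` is the number of samples equal to `i`. -/
def histCount {k n : ℕ} (x : Fin n → Fin k) (i : Fin k) : ℕ :=
  (Finset.univ.filter fun j => x j = i).card

namespace VarAux

/-- shift identity for weighted second moments -/
lemma sum_sq_shift {ι : Type*} [Fintype ι] (w g : ι → ℝ) (hw1 : ∑ i, w i = 1) (t : ℝ) :
    ∑ i, w i * (g i - t)^2
      = (∑ i, w i * (g i - ∑ j, w j * g j)^2) + ((∑ j, w j * g j) - t)^2 := by
  set μ := ∑ j, w j * g j with hμ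
  have h1 : ∀ i, w i * (g i - t)^2
      = w i * (g i - μ)^2 + (2*(μ - t)) * (w i * g i) + (t^2 - μ^2) * w i := fun i => by ring
  calc ∑ i, w i * (g i - t)^2
      = ∑ i, (w i * (g i - μ)^2 + (2*(μ - t)) * (w i * g i) + (t^2 - μ^2) * w i) :=
        Finset.sum_congr rfl fun i _ => h1 i
    _ = (∑ i, w i * (g i - μ)^2) + (2*(μ - t)) * μ + (t^2 - μ^2) * 1 := by
        rw [Finset.sum_add_distrib, Finset.sum_add_distrib, ← Finset.mul_sum, ← Finset.mul_sum,
          hw1, ← hμ]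
    _ = (∑ i, w i * (g i - μ)^2) + (μ - t)^2 := by ring

lemma wvar_le {ι : Type*} [Fintype ι] (w g : ι → ℝ) (hw : ∀ i, 0 ≤ w i)
    (hw1 : ∑ i, w i = 1) (t c : ℝ) (h : ∀ i, |g i - t| ≤ c) :
    ∑ i, w i * (g i - ∑ j, w j * g j)^2 ≤ c^2 := by
  have key := sum_sq_shift w g hw1 t
  have h2 : ∑ i, w i * (g i - t)^2 ≤ c^2 := by
    calc ∑ i, w i * (g i - t)^2 ≤ ∑ i, w i * c^2 := by
          refine Finset.sum_le_sum fun i _ => mul_le_mul_of_nonneg_left ?_ (hw i)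
          have := abs_le.mp (h i)
          exact sq_le_sq' (by linarith) this.2
      _ = c^2 := by rw [← Finset.sum_mul, hw1, one_mul]
  nlinarith [sq_nonneg ((∑ j, w j * g j) - t)]

lemma abs_wsum_le {ι : Type*} [Fintype ι] (w h : ι → ℝ) (hw : ∀ i, 0 ≤ w i)
    (hw1 : ∑ i, w i = 1) (c : ℝ) (hc : ∀ i, |h i| ≤ c) : |∑ i, w i * h i| ≤ c := by
  calc |∑ i, w i * h i| ≤ ∑ i, |w i * h i| := Finset.abs_sum_le_sum_abs _ _
    _ ≤ ∑ i, w i * c := by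
        refine Finset.sum_le_sum fun i _ => ?_
        rw [abs_mul, abs_of_nonneg (hw i)]
        exact mul_le_mul_of_nonneg_left (hc i) (hw i)
    _ = c := by rw [← Finset.sum_mul, hw1, one_mul]

noncomputable def E {α : Type*} [Fintype α] (p : α → ℝ) {n : ℕ} (f : (Fin n → α) → ℝ) : ℝ :=
  ∑ x : Fin n → α, (∏ j, p (x j)) * f x

lemma weight_sum {α : Type*} [Fintype α] [DecidableEq α] (p : α → ℝ)
    (hsum : ∑ a, p a = 1) (n : ℕ) : ∑ x : Fin n → α, ∏ j, p (x j) = 1 := by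
  calc ∑ x : Fin n → α, ∏ j, p (x j)
      = ∑ x ∈ Fintype.piFinset (fun _ : Fin n => (univ : Finset α)), ∏ j, p (x j) := by
        rw [Fintype.piFinset_univ]
    _ = ∏ _j : Fin n, ∑ a, p a := (Finset.prod_univ_sum _ _).symm
    _ = 1 := by rw [hsum]; simp

lemma E_succ {α : Type*} [Fintype α] (p : α → ℝ) {n : ℕ}
    (F : (Fin (n+1) → α) → ℝ) :
    E p F = ∑ a, p a * E p (fun y => F (Fin.cons a y)) := by
  unfold E
  rw [← Equiv.sum_comp (Fin.consEquiv fun _ => α)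
    (fun x : Fin (n+1) → α => (∏ j, p (x j)) * F x)]
  simp only [Fin.consEquiv_apply]
  rw [Fintype.sum_prod_type]
  refine Finset.sum_congr rfl fun a _ => ?_
  rw [Finset.mul_sum]
  refine Finset.sum_congr rfl fun y _ => ?_
  have hh : ((Fin.consEquiv fun _ => α) (a, y) : Fin (n+1) → α) = Fin.cons a y := rfl
  rw [hh, Fin.prod_univ_succ, Fin.cons_zero]
  simp only [Fin.cons_succ]
  ring

lemma E_bounded {α : Type*} [Fintype α] [DecidableEq α] (p : α → ℝ)
    (hp : ∀ a, 0 ≤ p a) (hsum : ∑ a, p a = 1) {n : ℕ} (f : (Fin n → α) → ℝ) (c : ℝ)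
    (hf : ∀ x, |f x| ≤ c) : |E p f| ≤ c :=
  abs_wsum_le _ _ (fun x => Finset.prod_nonneg fun j _ => hp (x j))
    (weight_sum p hsum n) c hf

/-- Bounded differences variance bound, by induction on n. -/
lemma bdd_var {α : Type*} [Fintype α] [DecidableEq α] [Nonempty α] (p : α → ℝ)
    (hp : ∀ a, 0 ≤ p a) (hsum : ∑ a, p a = 1) (c : ℝ) :
    ∀ (n : ℕ) (f : (Fin n → α) → ℝ),
      (∀ (x : Fin n → α) (j : Fin n) (a : α), |f (Function.update x j a) - f x| ≤ c) →
      E p (fun x => (f x - E p f)^2) ≤ n * c^2 / 4 := by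
  intro n
  induction n with
  | zero =>
      intro f _
      have hx : ∀ x : Fin 0 → α, f x = f (fun j => j.elim0) := by
        intro x; congr 1; funext j; exact j.elim0
      have hE : E p f = f (fun j => j.elim0) := by
        unfold E
        rw [Finset.univ_unique, Finset.sum_singleton]
        simp [hx default]
      unfold E
      rw [Finset.univ_unique, Finset.sum_singleton]
      simp [hx default, hE]
  | succ n ih =>
      intro f hf
      set G : α → (Fin n → α) → ℝ := fun a y => f (Fin.cons a y) with hG
      set g : α → ℝ := fun a => E p (G a) with hg
      have hμ : E p f = ∑ a, p a * g a := E_succ p f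
      have hGbd : ∀ a, ∀ (y : Fin n → α) (j : Fin n) (b : α),
          |G a (Function.update y j b) - G a y| ≤ c := by
        intro a y j b
        have hthis : (Fin.cons a (Function.update y j b) : Fin (n+1) → α)
            = Function.update (Fin.cons a y) j.succ b :=
          Fin.cons_update (α := fun _ : Fin (n+1) => α) a y j b
        simp only [hG, hthis]
        exact hf (Fin.cons a y) j.succ b
      -- difference bound for g
      have hc0 : 0 ≤ c := le_trans (abs_nonneg _)
        (hf (fun _ => Classical.arbitrary α) ⟨0, Nat.succ_pos n⟩ (Classical.arbitrary α))
      have hgdiff : ∀ a b, |g a - g b| ≤ c := by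
        intro a b
        have : g a - g b = E p (fun y => G a y - G b y) := by
          simp only [hg, E, ← Finset.sum_sub_distrib]
          exact Finset.sum_congr rfl fun y _ => by ring
        rw [this]
        refine E_bounded p hp hsum _ c fun y => ?_
        have hupd : (Fin.cons a y : Fin (n+1) → α) = Function.update (Fin.cons b y) 0 a :=
          (Fin.update_cons_zero (α := fun _ : Fin (n+1) => α) b y a).symm
        simp only [hG, hupd]
        exact hf (Fin.cons b y) 0 a
      -- decomposition of variance
      have wnn : ∀ y : Fin n → α, 0 ≤ ∏ j, p (y j) :=
        fun y => Finset.prod_nonneg fun j _ => hp (y j)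
      have w1 : ∑ y : Fin n → α, ∏ j, p (y j) = 1 := weight_sum p hsum n
      have hdecomp : ∀ a, E p (fun y => (G a y - E p f)^2)
          = E p (fun y => (G a y - g a)^2) + (g a - E p f)^2 := by
        intro a
        have := sum_sq_shift (fun y : Fin n → α => ∏ j, p (y j)) (G a) w1 (E p f)
        simpa [E, hg] using this
      have hvar : E p (fun x => (f x - E p f)^2)
          = ∑ a, p a * (E p (fun y => (G a y - g a)^2) + (g a - E p f)^2) := by
        rw [E_succ p (fun x => (f x - E p f)^2)]
        exact Finset.sum_congr rfl fun a _ => by rw [hdecomp a]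
      rw [hvar]
      have step1 : ∑ a, p a * (E p (fun y => (G a y - g a)^2) + (g a - E p f)^2)
          = (∑ a, p a * E p (fun y => (G a y - g a)^2)) + ∑ a, p a * (g a - E p f)^2 := by
        rw [← Finset.sum_add_distrib]
        exact Finset.sum_congr rfl fun a _ => by ring
      rw [step1]
      have b1 : (∑ a, p a * E p (fun y => (G a y - g a)^2)) ≤ n * c^2 / 4 := by
        calc ∑ a, p a * E p (fun y => (G a y - g a)^2)
            ≤ ∑ a, p a * (n * c^2 / 4) := by
              refine Finset.sum_le_sum fun a _ => mul_le_mul_of_nonneg_left ?_ (hp a)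
              have := ih (G a) (hGbd a)
              simpa [E, hg] using this
          _ = n * c^2 / 4 := by rw [← Finset.sum_mul, hsum, one_mul]
      have b2 : (∑ a, p a * (g a - E p f)^2) ≤ c^2 / 4 := by
        -- Popoviciu via midpoint of min and max
        have hne : (univ : Finset α).Nonempty := univ_nonempty
        set m := (univ.image g).min' (hne.image g) with hm
        set s := (univ.image g).max' (hne.image g) with hs
        obtain ⟨am, _, hamg⟩ := Finset.mem_image.mp ((univ.image g).min'_mem (hne.image g))
        obtain ⟨as, _, hasg⟩ := Finset.mem_image.mp ((univ.image g).max'_mem (hne.image g))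
        have hsm : s - m ≤ c := by
          have := hgdiff as am
          rw [hamg, hasg] at this
          have := abs_le.mp this
          linarith [this.2]
        have hbd : ∀ a, |g a - (m + s)/2| ≤ c / 2 := by
          intro a
          have h1 : m ≤ g a := Finset.min'_le _ _ (Finset.mem_image_of_mem g (mem_univ a))
          have h2 : g a ≤ s := Finset.le_max' _ _ (Finset.mem_image_of_mem g (mem_univ a))
          rw [abs_le]; constructor <;> [linarith; linarith]
        have := wvar_le p g hp hsum ((m + s)/2) (c/2) hbd
        rw [hμ]
        calc ∑ a, p a * (g a - ∑ b, p b * g b)^2 ≤ (c/2)^2 := this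
          _ = c^2 / 4 := by ring
      push_cast
      linarith
end VarAux

/-- For i.i.d. samples from a distribution on `{1,...,k}` with histogram
`N`, if `φ` is `M`-Lipschitz on `[0,1]` then `Var[∑ i, φ(N i / n)] ≤ M² / n`. -/
theorem variance_plugin_lipschitz (k n : ℕ) (hk : 0 < k) (hn : 0 < n)
    (p : Fin k → ℝ) (hp : ∀ i, 0 ≤ p i) (hsum : (∑ i, p i) = 1)
    (φ : ℝ → ℝ) (M : ℝ) (hM : 0 ≤ M)
    (hLip : ∀ x ∈ Set.Icc (0:ℝ) 1, ∀ y ∈ Set.Icc (0:ℝ) 1, |φ x - φ y| ≤ M * |x - y|) :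
    iidExpect k n p (fun x =>
        ((∑ i, φ ((histCount x i : ℝ) / n)) -
          iidExpect k n p (fun y => ∑ i, φ ((histCount y i : ℝ) / n))) ^ 2)
      ≤ M ^ 2 / n := by
  haveI : Nonempty (Fin k) := Fin.pos_iff_nonempty.mp hk
  have hn' : (0:ℝ) < n := by exact_mod_cast hn
  set f : (Fin n → Fin k) → ℝ := fun x => ∑ i, φ ((histCount x i : ℝ) / n) with hfdef
  -- histogram values lie in [0,1]
  have hmem : ∀ (x : Fin n → Fin k) (i : Fin k),
      ((histCount x i : ℝ) / n) ∈ Set.Icc (0:ℝ) 1 := by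
    intro x i
    constructor
    · positivity
    · rw [div_le_one hn']
      have : histCount x i ≤ n := by
        unfold histCount
        calc (univ.filter fun j => x j = i).card ≤ (univ : Finset (Fin n)).card :=
              Finset.card_filter_le _ _
          _ = n := by simp
      exact_mod_cast this
  -- count change formula
  have hcount : ∀ (x : Fin n → Fin k) (j : Fin n) (a i : Fin k),
      (histCount (Function.update x j a) i : ℝ) - histCount x i
        = (if a = i then 1 else 0) - (if x j = i then 1 else 0) := by
    intro x j a i
    unfold histCount
    rw [Finset.card_filter, Finset.card_filter]
    push_cast
    rw [← Finset.sum_sub_distrib]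
    rw [Finset.sum_eq_single j]
    · simp [Function.update_self]
    · intro l _ hl
      rw [Function.update_of_ne hl]
      ring
    · intro h; exact absurd (Finset.mem_univ j) h
  -- bounded differences
  have hbd : ∀ (x : Fin n → Fin k) (j : Fin n) (a : Fin k),
      |f (Function.update x j a) - f x| ≤ 2 * M / n := by
    intro x j a
    have hdiff : f (Function.update x j a) - f x
        = ∑ i, (φ ((histCount (Function.update x j a) i : ℝ) / n)
            - φ ((histCount x i : ℝ) / n)) := by
      simp only [hfdef, ← Finset.sum_sub_distrib]
    rw [hdiff]
    calc |∑ i, (φ ((histCount (Function.update x j a) i : ℝ) / n)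
            - φ ((histCount x i : ℝ) / n))|
        ≤ ∑ i, |φ ((histCount (Function.update x j a) i : ℝ) / n)
            - φ ((histCount x i : ℝ) / n)| := Finset.abs_sum_le_sum_abs _ _
      _ ≤ ∑ i, M * |((histCount (Function.update x j a) i : ℝ) / n)
            - ((histCount x i : ℝ) / n)| := by
          refine Finset.sum_le_sum fun i _ => hLip _ (hmem _ i) _ (hmem _ i)
      _ = ∑ i : Fin k, M / n * |(if a = i then (1:ℝ) else 0) - (if x j = i then 1 else 0)| := by
          refine Finset.sum_congr rfl fun i _ => ?_
          rw [div_sub_div_same, abs_div, abs_of_pos hn', hcount x j a i]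
          ring
      _ ≤ ∑ i : Fin k, M / n * ((if a = i then (1:ℝ) else 0) + (if x j = i then 1 else 0)) := by
          refine Finset.sum_le_sum fun i _ => ?_
          refine mul_le_mul_of_nonneg_left ?_ (by positivity)
          refine (abs_sub _ _).trans ?_
          gcongr <;> [skip; skip] <;> split <;> simp
      _ = 2 * M / n := by
          rw [← Finset.mul_sum, Finset.sum_add_distrib, Finset.sum_ite_eq, Finset.sum_ite_eq]
          simp; ring
  have key := VarAux.bdd_var p hp hsum (2 * M / n) n f hbd
  have hE : iidExpect k n p = fun F => VarAux.E p F := rfl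
  rw [hE]
  have hle : VarAux.E p (fun x => (f x - VarAux.E p f)^2) ≤ n * (2*M/n)^2 / 4 := key
  have heq : (n:ℝ) * (2*M/n)^2 / 4 = M^2 / n := by
    field_simp
    ring
  calc VarAux.E p (fun x =>
        ((∑ i, φ ((histCount x i : ℝ) / n)) -
          VarAux.E p (fun y => ∑ i, φ ((histCount y i : ℝ) / n))) ^ 2)
      = VarAux.E p (fun x => (f x - VarAux.E p f)^2) := rfl
    _ ≤ n * (2*M/n)^2 / 4 := hle
    _ = M^2 / n := heq
end

section
/- Let φ : [0,1] → ℝ be twice continuously differentiable on (0,1) with |φ''(p)| ≤ W p^{α-2} + c for all p ∈ (0,1), where α ∈ [3/2, 2), and suppose φ'(0) = 0 (as a limit). Then the second-order modulus of smoothness satisfies ω²(φ, t) ≤ C t^α for some constant C > 0 and all t ∈ (0,1), where ω²(φ,t) = sup_{h∈(0,t]} sup_x |φ(x+h) - 2φ(x) + φ(x-h)| (supremum over x with x±h ∈ [0,1]). -/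
/-!
On `(0, 1)` the bound on `φ''` is dominated by the derivative of
`G x = W / (α - 1) * x ^ (α - 1) + c * x`, so `|φ' q - φ' p| ≤ G q - G p`, and the subadditivity
of `x ↦ x ^ (α - 1)` turns this into the Hölder estimate `|φ' q - φ' p| ≤ K (q - p) ^ (α - 1)`.
The second difference is the increment of `s ↦ φ (x + s) + φ (x - s)` on `[0, h]`, whose
derivative `φ' (x + s) - φ' (x - s)` is then at most `K (2 s) ^ (α - 1) ≤ 2 K h ^ (α - 1)`;
the mean value inequality gives `|φ (x + h) - 2 φ x + φ (x - h)| ≤ 2 K h ^ α`.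
-/

open Set

lemma abs_sub_le_sub_of_abs_deriv_le {f f' g g' : ℝ → ℝ} {a b : ℝ} (hab : a ≤ b)
    (hf : ∀ x ∈ Icc a b, HasDerivAt f (f' x) x) (hg : ∀ x ∈ Icc a b, HasDerivAt g (g' x) x)
    (hle : ∀ x ∈ Icc a b, |f' x| ≤ g' x) :
    |f b - f a| ≤ g b - g a := by
  refine image_norm_le_of_norm_deriv_right_le_deriv_boundary' (f := fun x => f x - f a)
    (B := fun x => g x - g a) (fun x hx => ((hf x hx).sub_const _).continuousAt.continuousWithinAt)
    (fun x hx => ((hf x (Ico_subset_Icc_self hx)).sub_const _).hasDerivWithinAt) (by simp)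
    (fun x hx => ((hg x hx).sub_const _).continuousAt.continuousWithinAt)
    (fun x hx => ((hg x (Ico_subset_Icc_self hx)).sub_const _).hasDerivWithinAt)
    (fun x hx => hle x (Ico_subset_Icc_self hx)) (right_mem_Icc.2 hab)

lemma Real.rpow_sub_rpow_le_rpow_sub_s14 {p q s : ℝ} (hp : 0 ≤ p) (hpq : p ≤ q) (hs0 : 0 ≤ s)
    (hs1 : s ≤ 1) : q ^ s - p ^ s ≤ (q - p) ^ s := by
  have := Real.rpow_add_le_add_rpow (sub_nonneg.2 hpq) hp hs0 hs1
  rw [sub_add_cancel] at this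
  linarith

lemma Real.rpow_two_mul_le_two_mul_rpow {s h r : ℝ} (hs : 0 ≤ s) (hsh : s ≤ h) (hr0 : 0 ≤ r)
    (hr1 : r ≤ 1) : (2 * s) ^ r ≤ 2 * h ^ r := calc
  (2 * s) ^ r ≤ 2 ^ r * h ^ r := by rw [Real.mul_rpow zero_le_two hs]; gcongr
  _ ≤ 2 ^ (1:ℝ) * h ^ r := mul_le_mul_of_nonneg_right
    (Real.rpow_le_rpow_of_exponent_le one_le_two hr1) (Real.rpow_nonneg (hs.trans hsh) r)
  _ = 2 * h ^ r := by rw [Real.rpow_one]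

lemma abs_sub_le_rpow_of_abs_deriv_le {f f' : ℝ → ℝ} {α W c p q : ℝ} (hα1 : 1 < α) (hα2 : α ≤ 2)
    (hW : 0 ≤ W) (hc : 0 ≤ c) (hp : 0 < p) (hpq : p ≤ q) (hqp : q - p ≤ 1)
    (hf : ∀ x ∈ Icc p q, HasDerivAt f (f' x) x)
    (hbound : ∀ x ∈ Icc p q, |f' x| ≤ W * x ^ (α - 2) + c) :
    |f q - f p| ≤ (W / (α - 1) + c) * (q - p) ^ (α - 1) := by
  have hα : α - 1 ≠ 0 := by linarith
  have hG : ∀ x ∈ Icc p q, HasDerivAt (fun x => W / (α - 1) * x ^ (α - 1) + c * x)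
      (W * x ^ (α - 2) + c) x := by
    intro x hx
    have hpow : HasDerivAt (fun x => x ^ (α - 1)) ((α - 1) * x ^ (α - 2)) x := by
      simpa [show α - 1 - 1 = α - 2 by ring] using
        Real.hasDerivAt_rpow_const (p := α - 1) (Or.inl (hp.trans_le hx.1).ne')
    exact ((hpow.const_mul (W / (α - 1))).add ((hasDerivAt_id' x).const_mul c)).congr_deriv
      (by field_simp)
  calc |f q - f p|
      ≤ W / (α - 1) * (q ^ (α - 1) - p ^ (α - 1)) + c * (q - p) := by
        have := abs_sub_le_sub_of_abs_deriv_le hpq hf hG hbound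
        linarith
    _ ≤ W / (α - 1) * (q - p) ^ (α - 1) + c * (q - p) ^ (α - 1) := by
        gcongr
        · exact Real.rpow_sub_rpow_le_rpow_sub_s14 hp.le hpq (by linarith) (by linarith)
        · exact Real.self_le_rpow_of_le_one (sub_nonneg.2 hpq) hqp (by linarith)
    _ = (W / (α - 1) + c) * (q - p) ^ (α - 1) := by ring

lemma abs_second_difference_le {φ φ' : ℝ → ℝ} {x h M : ℝ} (hh : 0 ≤ h)
    (hcont : ContinuousOn φ (Icc (x - h) (x + h)))
    (hd : ∀ y ∈ Ioo (x - h) (x + h), HasDerivAt φ (φ' y) y)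
    (hM : ∀ s ∈ Ico 0 h, |φ' (x + s) - φ' (x - s)| ≤ M) :
    |φ (x + h) - 2 * φ x + φ (x - h)| ≤ M * h := by
  have hcont' : ContinuousOn (fun s => φ (x + s) + φ (x - s)) (Icc 0 h) :=
    (hcont.comp (by fun_prop) fun s hs => ⟨by linarith [hs.1], by linarith [hs.2]⟩).add
      (hcont.comp (by fun_prop) fun s hs => ⟨by linarith [hs.2], by linarith [hs.1]⟩)
  have hderiv : ∀ s ∈ Ico 0 h, HasDerivWithinAt (fun s => φ (x + s) + φ (x - s))
      (φ' (x + s) - φ' (x - s)) (Ici s) s := by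
    rintro s ⟨hs0, hsh⟩
    have hplus := (hd (x + s) ⟨by linarith, by linarith⟩).comp s ((hasDerivAt_id s).const_add x)
    have hminus := (hd (x - s) ⟨by linarith, by linarith⟩).comp s ((hasDerivAt_id s).const_sub x)
    exact ((hplus.add hminus).congr_deriv (by ring)).hasDerivWithinAt
  have := norm_image_sub_le_of_norm_deriv_right_le_segment hcont' hderiv hM h (right_mem_Icc.2 hh)
  simp only [Real.norm_eq_abs, add_zero, sub_zero] at this
  convert this using 2
  ring

theorem second_modulus_bound_general (α : ℝ) (hα1 : 3 / 2 ≤ α) (hα2 : α < 2)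
    (W c : ℝ) (hW : 0 < W) (hc : 0 ≤ c) (φ φ' φ'' : ℝ → ℝ)
    (hcont : ContinuousOn φ (Set.Icc 0 1))
    (hd1 : ∀ p ∈ Set.Ioo (0:ℝ) 1, HasDerivAt φ (φ' p) p)
    (hd2 : ∀ p ∈ Set.Ioo (0:ℝ) 1, HasDerivAt φ' (φ'' p) p)
    (hbound : ∀ p ∈ Set.Ioo (0:ℝ) 1, |φ'' p| ≤ W * p ^ (α - 2) + c) :
    ∃ C > 0, ∀ t ∈ Set.Ioo (0:ℝ) 1, ∀ h ∈ Set.Ioc (0:ℝ) t, ∀ x : ℝ,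
      x - h ∈ Set.Icc (0:ℝ) 1 → x + h ∈ Set.Icc (0:ℝ) 1 →
      |φ (x + h) - 2 * φ x + φ (x - h)| ≤ C * t ^ α := by
  have hα : 1 < α := by linarith
  set K := W / (α - 1) + c
  have hK : 0 < K := add_pos_of_pos_of_nonneg (div_pos hW (by linarith)) hc
  refine ⟨2 * K, by positivity, ?_⟩
  rintro t - h ⟨hh, hht⟩ x ⟨hxh, -⟩ ⟨-, hxh1⟩
  have hholder : ∀ s ∈ Ico 0 h, |φ' (x + s) - φ' (x - s)| ≤ 2 * K * h ^ (α - 1) := by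
    rintro s ⟨hs0, hsh⟩
    have hinner : ∀ y ∈ Icc (x - s) (x + s), y ∈ Ioo (0:ℝ) 1 := fun y hy =>
      ⟨by linarith [hy.1], by linarith [hy.2]⟩
    calc |φ' (x + s) - φ' (x - s)| ≤ K * (x + s - (x - s)) ^ (α - 1) :=
          abs_sub_le_rpow_of_abs_deriv_le hα hα2.le hW.le hc (by linarith) (by linarith)
            (by linarith) (fun y hy => hd2 y (hinner y hy)) (fun y hy => hbound y (hinner y hy))
      _ ≤ K * (2 * h ^ (α - 1)) := by
        rw [show x + s - (x - s) = 2 * s by ring]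
        gcongr
        exact Real.rpow_two_mul_le_two_mul_rpow hs0 hsh.le (by linarith) (by linarith)
      _ = 2 * K * h ^ (α - 1) := by ring
  calc |φ (x + h) - 2 * φ x + φ (x - h)|
      ≤ 2 * K * h ^ (α - 1) * h :=
        abs_second_difference_le hh.le (hcont.mono (Icc_subset_Icc hxh hxh1))
          (fun y hy => hd1 y ⟨by linarith [hy.1], by linarith [hy.2]⟩) hholder
    _ = 2 * K * h ^ α := by rw [mul_assoc, ← Real.rpow_add_one hh.ne', sub_add_cancel]
    _ ≤ 2 * K * t ^ α := by gcongr

/-- If `φ` is twice continuously differentiable on `(0,1)` with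
`φ'(0) = 0` (as a right limit) and `|φ''(p)| ≤ W p^(α-2) + c` with `α ∈ [3/2, 2)`,
then the second-order modulus of smoothness satisfies `ω²(φ,t) ≤ C t^α`. -/
theorem second_modulus_bound (α : ℝ) (hα1 : 3 / 2 ≤ α) (hα2 : α < 2)
    (W c : ℝ) (hW : 0 < W) (hc : 0 ≤ c) (φ φ' φ'' : ℝ → ℝ)
    (hcont : ContinuousOn φ (Set.Icc 0 1))
    (hd1 : ∀ p ∈ Set.Ioo (0:ℝ) 1, HasDerivAt φ (φ' p) p)
    (hd2 : ∀ p ∈ Set.Ioo (0:ℝ) 1, HasDerivAt φ' (φ'' p) p)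
    (hd2cont : ContinuousOn φ'' (Set.Ioo 0 1))
    (hlim : Filter.Tendsto φ' (nhdsWithin 0 (Set.Ioi 0)) (nhds 0))
    (hbound : ∀ p ∈ Set.Ioo (0:ℝ) 1, |φ'' p| ≤ W * p ^ (α - 2) + c) :
    ∃ C > 0, ∀ t ∈ Set.Ioo (0:ℝ) 1, ∀ h ∈ Set.Ioc (0:ℝ) t, ∀ x : ℝ,
      x - h ∈ Set.Icc (0:ℝ) 1 → x + h ∈ Set.Icc (0:ℝ) 1 →
      |φ (x + h) - 2 * φ x + φ (x - h)| ≤ C * t ^ α :=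
  second_modulus_bound_general α hα1 hα2 W c hW hc φ φ' φ'' hcont hd1 hd2 hbound
end

section
/- Let φ : [0,1] → ℝ be continuous, L a positive integer, Δ ∈ (0,1], and let g(x) = ∑_{m=0}^L a_m x^m be the degree-L polynomial of best uniform approximation to φ on [0,Δ]. Let N ~ Poisson(np) with p ∈ [0,Δ], let ĝ(N) = ∑_{m=0}^L a_m (N)_m / n^m (an unbiased estimator of g(p)), and let T(x) = min(max(x, inf_{[0,Δ]}φ), sup_{[0,Δ]}φ) be truncation to the range of φ on [0,Δ]. Then |E[T(ĝ(N))] - φ(p)| ≤ √(Var[ĝ(N)]) + 2·E_L(φ,[0,Δ]), where E_L(φ,I) = inf over degree-L polynomials q of sup_{x∈I}|φ(x)-q(x)|. -/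
/-- Best uniform approximation error of `f` on `I` by polynomials of degree at most `L`. -/
noncomputable def bestApproxError (f : ℝ → ℝ) (L : ℕ) (I : Set ℝ) : ℝ :=
  sInf {e : ℝ | ∃ q : Polynomial ℝ, q.natDegree ≤ L ∧ ∀ x ∈ I, |f x - q.eval x| ≤ e}

/-- The unbiased estimator `ĝ(N) = ∑ m, a m (N)_m / n^m` of a polynomial
`g(p) = ∑ m, a m p^m` under `N ~ Poisson(np)`. -/
noncomputable def polyEstimator (L : ℕ) (a : Fin (L + 1) → ℝ) (n : ℕ) (x : ℕ) : ℝ :=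
  ∑ m : Fin (L + 1), a m * (x.descFactorial (m : ℕ) : ℝ) / (n : ℝ) ^ (m : ℕ)

/-!
Truncation to `[inf φ, sup φ]` is 1-Lipschitz and fixes `φ(p)`, so pointwise
`|T(ĝ(N)) - φ(p)| ≤ |ĝ(N) - g(p)| + |g(p) - φ(p)|`. The factorial moments
`E[(N)_m] = (np)^m` of the Poisson distribution make `ĝ` unbiased, so after taking expectations
the first term is the mean absolute deviation of `ĝ(N)`, at most its standard deviation, and the
second is at most `E_L(φ, [0,Δ])`.
-/

theorem abs_min_max_sub_le {lo hi v : ℝ} (hv : v ∈ Set.Icc lo hi) (u : ℝ) :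
    |min (max u lo) hi - v| ≤ |u - v| := by
  have hclamp : min (max v lo) hi = v := by rw [max_eq_left hv.1, min_eq_left hv.2]
  calc |min (max u lo) hi - v| = |min (max u lo) hi - min (max v lo) hi| := by rw [hclamp]
    _ ≤ max |max u lo - max v lo| |hi - hi| := abs_min_sub_min_le_max _ _ _ _
    _ = |max u lo - max v lo| := by simp
    _ ≤ |u - v| := abs_max_sub_max_le_abs _ _ _

section ProbabilityWeights

variable {w : ℕ → ℝ}

theorem summable_mul_abs_of_summable_mul_sq (hw0 : ∀ x, 0 ≤ w x) (hw : Summable w) {f : ℕ → ℝ}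
    (hf : Summable fun x => w x * f x ^ 2) : Summable fun x => w x * |f x| := by
  refine (hw.add hf).of_nonneg_of_le (fun x => mul_nonneg (hw0 x) (abs_nonneg _)) fun x => ?_
  have habs : |f x| ≤ 1 + f x ^ 2 := by nlinarith [sq_abs (f x), abs_nonneg (f x)]
  nlinarith [hw0 x]

theorem tsum_mul_abs_le_sqrt_tsum_mul_sq (hw0 : ∀ x, 0 ≤ w x) (hw1 : HasSum w 1) {f : ℕ → ℝ}
    (hf : Summable fun x => w x * |f x|) (hf2 : Summable fun x => w x * f x ^ 2) :
    ∑' x, w x * |f x| ≤ √(∑' x, w x * f x ^ 2) := by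
  set ν := ∑' x, w x * |f x|
  have hν : 0 ≤ ν := tsum_nonneg fun x => mul_nonneg (hw0 x) (abs_nonneg _)
  have hspread : HasSum (fun x => w x * (|f x| - ν) ^ 2)
      (∑' x, w x * f x ^ 2 - 2 * ν * ν + ν ^ 2 * 1) := by
    have hexpand : (fun x => w x * (|f x| - ν) ^ 2)
        = fun x => w x * f x ^ 2 - 2 * ν * (w x * |f x|) + ν ^ 2 * w x := by
      funext x
      rw [sub_sq, sq_abs]
      ring
    rw [hexpand]
    exact (hf2.hasSum.sub (hf.hasSum.mul_left (2 * ν))).add (hw1.mul_left (ν ^ 2))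
  have hvar := hspread.nonneg fun x => mul_nonneg (hw0 x) (sq_nonneg _)
  rw [Real.le_sqrt hν (tsum_nonneg fun x => mul_nonneg (hw0 x) (sq_nonneg _))]
  linarith

theorem abs_tsum_mul_sub_le (hw0 : ∀ x, 0 ≤ w x) (hw1 : HasSum w 1) {F G : ℕ → ℝ} {c s : ℝ}
    (hG : HasSum (fun x => w x * G x) s) (hFG : ∀ x, |F x - c| ≤ G x) :
    |∑' x, w x * F x - c| ≤ s := by
  have hdev : ∀ x, |w x * (F x - c)| ≤ w x * G x := fun x => by
    rw [abs_mul, abs_of_nonneg (hw0 x)]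
    exact mul_le_mul_of_nonneg_left (hFG x) (hw0 x)
  have hsum : Summable fun x => w x * (F x - c) := .of_norm_bounded hG.summable hdev
  have hF : HasSum (fun x => w x * F x) (∑' x, w x * (F x - c) + c) := by
    simpa only [← mul_add, sub_add_cancel, one_mul] using hsum.hasSum.add (hw1.mul_right c)
  rw [hF.tsum_eq, add_sub_cancel_right, abs_le]
  constructor
  · exact hasSum_le (fun x => (abs_le.1 (hdev x)).1) hG.neg hsum.hasSum
  · exact hasSum_le (fun x => (abs_le.1 (hdev x)).2) hsum.hasSum hG

end ProbabilityWeights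

section Poisson

open Nat

/-- The Poisson(`r`) probability mass function, for real `r` (Mathlib's `poissonPMFReal` takes
`r : ℝ≥0`, while the moment identities below hold for every real `r`). -/
noncomputable def poissonWeight (r : ℝ) (x : ℕ) : ℝ := Real.exp (-r) * r ^ x / x !

theorem poissonWeight_nonneg {r : ℝ} (hr : 0 ≤ r) (x : ℕ) : 0 ≤ poissonWeight r x := by
  unfold poissonWeight; positivity

theorem hasSum_poissonWeight_mul_descFactorial (r : ℝ) (m : ℕ) :
    HasSum (fun x => poissonWeight r x * x.descFactorial m) (r ^ m) := by
  rw [← hasSum_nat_add_iff' m]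
  have hlow : ∑ x ∈ Finset.range m, poissonWeight r x * x.descFactorial m = 0 :=
    Finset.sum_eq_zero fun x hx => by
      rw [Nat.descFactorial_eq_zero_iff_lt.2 (Finset.mem_range.1 hx), Nat.cast_zero, mul_zero]
  have hshift : ∀ y, poissonWeight r (y + m) * (y + m).descFactorial m
      = r ^ m * Real.exp (-r) * (r ^ y / y !) := fun y => by
    have hfac : (y ! : ℝ) * (y + m).descFactorial m = (y + m)! := by
      exact_mod_cast Nat.add_sub_cancel y m ▸ Nat.factorial_mul_descFactorial (Nat.le_add_left m y)
    unfold poissonWeight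
    field_simp
    rw [← hfac, pow_add]
    ring
  have hexp : HasSum (fun y : ℕ => r ^ y / y !) (Real.exp r) := by
    rw [Real.exp_eq_exp_ℝ]; exact NormedSpace.expSeries_div_hasSum_exp r
  rw [hlow, sub_zero, funext hshift]
  have h := hexp.mul_left (r ^ m * Real.exp (-r))
  rwa [mul_assoc, ← Real.exp_add, neg_add_cancel, Real.exp_zero, mul_one] at h

theorem hasSum_poissonWeight (r : ℝ) : HasSum (poissonWeight r) 1 := by
  simpa using hasSum_poissonWeight_mul_descFactorial r 0

theorem summable_poissonWeight_mul_pow {r : ℝ} (hr : 0 ≤ r) (k : ℕ) :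
    Summable fun x => poissonWeight r x * ((x : ℝ) + 1) ^ k := by
  refine .of_nonneg_of_le (fun x => mul_nonneg (poissonWeight_nonneg hr x) (by positivity))
    (fun x => ?_) ((Real.summable_pow_div_factorial (2 ^ k * r)).mul_left (Real.exp (-r)))
  have hgrowth : ((x : ℝ) + 1) ^ k ≤ (2 ^ k) ^ x := by
    rw [← pow_mul, mul_comm, pow_mul]
    gcongr
    exact_mod_cast Nat.lt_two_pow_self (n := x)
  calc poissonWeight r x * ((x : ℝ) + 1) ^ k
      = Real.exp (-r) * (r ^ x * ((x : ℝ) + 1) ^ k) / x ! := by unfold poissonWeight; ring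
    _ ≤ Real.exp (-r) * (r ^ x * (2 ^ k) ^ x) / x ! := by gcongr
    _ = Real.exp (-r) * ((2 ^ k * r) ^ x / x !) := by ring

theorem summable_poissonWeight_mul_of_abs_le {r : ℝ} (hr : 0 ≤ r) {f : ℕ → ℝ} {C : ℝ} {k : ℕ}
    (hf : ∀ x, |f x| ≤ C * ((x : ℝ) + 1) ^ k) : Summable fun x => poissonWeight r x * f x := by
  refine .of_norm_bounded ((summable_poissonWeight_mul_pow hr k).mul_left C) fun x => ?_
  rw [Real.norm_eq_abs, abs_mul, abs_of_nonneg (poissonWeight_nonneg hr x), mul_left_comm]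
  exact mul_le_mul_of_nonneg_left (hf x) (poissonWeight_nonneg hr x)

theorem hasSum_poissonWeight_mul_polyEstimator {n : ℕ} (hn : n ≠ 0) {L : ℕ} (a : Fin (L + 1) → ℝ)
    (p : ℝ) : HasSum (fun x => poissonWeight (n * p) x * polyEstimator L a n x)
      (∑ m : Fin (L + 1), a m * p ^ (m : ℕ)) := by
  unfold polyEstimator
  simp_rw [Finset.mul_sum]
  refine hasSum_sum fun m _ => ?_
  have hterm : (fun x => poissonWeight (n * p) x * (a m * x.descFactorial m / (n : ℝ) ^ (m : ℕ)))
      = fun x => a m / (n : ℝ) ^ (m : ℕ) * (poissonWeight (n * p) x * x.descFactorial m) := by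
    funext x; ring
  have hmoment : a m / (n : ℝ) ^ (m : ℕ) * ((n : ℝ) * p) ^ (m : ℕ) = a m * p ^ (m : ℕ) := by
    have hn' : (n : ℝ) ≠ 0 := Nat.cast_ne_zero.2 hn
    rw [mul_pow]
    field_simp
  rw [hterm, ← hmoment]
  exact (hasSum_poissonWeight_mul_descFactorial _ m).mul_left _

theorem abs_polyEstimator_le {n : ℕ} (hn : n ≠ 0) {L : ℕ} (a : Fin (L + 1) → ℝ) (x : ℕ) :
    |polyEstimator L a n x| ≤ (∑ m, |a m|) * ((x : ℝ) + 1) ^ L := by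
  rw [Finset.sum_mul]
  refine (Finset.abs_sum_le_sum_abs _ _).trans (Finset.sum_le_sum fun m _ => ?_)
  have hn1 : (1 : ℝ) ≤ (n : ℝ) ^ (m : ℕ) :=
    one_le_pow₀ (by exact_mod_cast Nat.one_le_iff_ne_zero.2 hn)
  have hdesc : (x.descFactorial m : ℝ) ≤ ((x : ℝ) + 1) ^ L :=
    calc (x.descFactorial m : ℝ) ≤ (x : ℝ) ^ (m : ℕ) := by exact_mod_cast x.descFactorial_le_pow m
      _ ≤ ((x : ℝ) + 1) ^ (m : ℕ) := by gcongr; linarith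
      _ ≤ ((x : ℝ) + 1) ^ L := pow_le_pow_right₀ (by linarith [x.cast_nonneg (α := ℝ)]) m.is_le
  rw [abs_div, abs_mul, Nat.abs_cast, abs_of_nonneg (a := (n : ℝ) ^ (m : ℕ)) (by positivity)]
  calc |a m| * x.descFactorial m / (n : ℝ) ^ (m : ℕ) ≤ |a m| * x.descFactorial m :=
        div_le_self (by positivity) hn1
    _ ≤ |a m| * ((x : ℝ) + 1) ^ L := by gcongr

theorem summable_poissonWeight_mul_sq_polyEstimator_sub {r : ℝ} (hr : 0 ≤ r) {n : ℕ} (hn : n ≠ 0)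
    {L : ℕ} (a : Fin (L + 1) → ℝ) (μ : ℝ) :
    Summable fun x => poissonWeight r x * (polyEstimator L a n x - μ) ^ 2 := by
  refine summable_poissonWeight_mul_of_abs_le hr (C := ((∑ m, |a m|) + |μ|) ^ 2) (k := 2 * L)
    fun x => ?_
  have hpow : (1 : ℝ) ≤ ((x : ℝ) + 1) ^ L := one_le_pow₀ (by linarith [x.cast_nonneg (α := ℝ)])
  have hdev : |polyEstimator L a n x - μ| ≤ ((∑ m, |a m|) + |μ|) * ((x : ℝ) + 1) ^ L := by
    have hest := abs_polyEstimator_le hn a x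
    have htri := abs_sub (polyEstimator L a n x) μ
    nlinarith [abs_nonneg μ]
  calc |(polyEstimator L a n x - μ) ^ 2| = |polyEstimator L a n x - μ| ^ 2 := by
        rw [abs_pow]
    _ ≤ (((∑ m, |a m|) + |μ|) * ((x : ℝ) + 1) ^ L) ^ 2 := by gcongr
    _ = ((∑ m, |a m|) + |μ|) ^ 2 * ((x : ℝ) + 1) ^ (2 * L) := by ring

end Poisson

theorem best_poly_estimator_bias_general (φ : ℝ → ℝ) (L : ℕ) (Δ : ℝ)
    (hφ : ContinuousOn φ (Set.Icc 0 Δ))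
    (a : Fin (L + 1) → ℝ)
    (hbest : ∀ x ∈ Set.Icc (0:ℝ) Δ,
      |φ x - ∑ m : Fin (L + 1), a m * x ^ (m : ℕ)| ≤ bestApproxError φ L (Set.Icc 0 Δ))
    (n : ℕ) (hn : 0 < n) (p : ℝ) (hp : p ∈ Set.Icc (0:ℝ) Δ) :
    |(∑' x : ℕ, (Real.exp (-(n * p)) * (n * p) ^ x / (x.factorial : ℝ)) *
          (min (max (polyEstimator L a n x) (sInf (φ '' Set.Icc 0 Δ)))
            (sSup (φ '' Set.Icc 0 Δ))))
        - φ p|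
      ≤ Real.sqrt (∑' x : ℕ,
          (Real.exp (-(n * p)) * (n * p) ^ x / (x.factorial : ℝ)) *
            (polyEstimator L a n x -
              ∑' y : ℕ, (Real.exp (-(n * p)) * (n * p) ^ y / (y.factorial : ℝ)) *
                polyEstimator L a n y) ^ 2)
        + 2 * bestApproxError φ L (Set.Icc 0 Δ) := by
  set B := bestApproxError φ L (Set.Icc 0 Δ)
  set g := polyEstimator L a n
  set μ := ∑ m : Fin (L + 1), a m * p ^ (m : ℕ)
  have hr : 0 ≤ (n : ℝ) * p := mul_nonneg n.cast_nonneg hp.1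
  have hw0 := poissonWeight_nonneg hr
  have hw1 := hasSum_poissonWeight (n * p)
  have hmean : ∑' y, poissonWeight (n * p) y * g y = μ :=
    (hasSum_poissonWeight_mul_polyEstimator hn.ne' a p).tsum_eq
  have happrox : |φ p - μ| ≤ B := hbest p hp
  have hrange : φ p ∈ Set.Icc (sInf (φ '' Set.Icc 0 Δ)) (sSup (φ '' Set.Icc 0 Δ)) := by
    have hK := isCompact_Icc.image_of_continuousOn hφ
    exact ⟨csInf_le hK.bddBelow ⟨p, hp, rfl⟩, le_csSup hK.bddAbove ⟨p, hp, rfl⟩⟩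
  have hsq := summable_poissonWeight_mul_sq_polyEstimator_sub hr hn.ne' a μ
  have habs := summable_mul_abs_of_summable_mul_sq hw0 hw1.summable hsq
  have hbound : HasSum (fun x => poissonWeight (n * p) x * (|g x - μ| + B))
      (∑' x, poissonWeight (n * p) x * |g x - μ| + B) := by
    simpa only [mul_add, one_mul] using habs.hasSum.add (hw1.mul_right B)
  have hbias := abs_tsum_mul_sub_le hw0 hw1 hbound fun x =>
    calc _ ≤ |g x - φ p| := abs_min_max_sub_le hrange (g x)
      _ ≤ |g x - μ| + |μ - φ p| := abs_sub_le _ _ _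
      _ ≤ |g x - μ| + B := by rw [abs_sub_comm μ]; gcongr
  calc _ ≤ ∑' x, poissonWeight (n * p) x * |g x - μ| + B := hbias
    _ ≤ √(∑' x, poissonWeight (n * p) x * (g x - μ) ^ 2) + B := by
        gcongr; exact tsum_mul_abs_le_sqrt_tsum_mul_sq hw0 hw1 habs hsq
    _ ≤ √(∑' x, poissonWeight (n * p) x * (g x - ∑' y, poissonWeight (n * p) y * g y) ^ 2)
        + 2 * B := by rw [hmean]; linarith [(abs_nonneg _).trans happrox]

/-- Bias bound for the truncated best polynomial estimator:
`|E[T(ĝ(N))] - φ(p)| ≤ √(Var[ĝ(N)]) + 2 E_L(φ, [0,Δ])`, where `N ~ Poisson(np)`,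
`g` is the best degree-`L` approximation of `φ` on `[0,Δ]`, `ĝ` is its unbiased
estimator, and `T` truncates to `[inf φ, sup φ]` on `[0,Δ]`. -/
theorem best_poly_estimator_bias (φ : ℝ → ℝ) (L : ℕ) (Δ : ℝ)
    (hΔ : Δ ∈ Set.Ioc (0:ℝ) 1) (hφ : ContinuousOn φ (Set.Icc 0 Δ))
    (a : Fin (L + 1) → ℝ)
    (hbest : ∀ x ∈ Set.Icc (0:ℝ) Δ,
      |φ x - ∑ m : Fin (L + 1), a m * x ^ (m : ℕ)| ≤ bestApproxError φ L (Set.Icc 0 Δ))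
    (n : ℕ) (hn : 0 < n) (p : ℝ) (hp : p ∈ Set.Icc (0:ℝ) Δ) :
    |(∑' x : ℕ, (Real.exp (-(n * p)) * (n * p) ^ x / (x.factorial : ℝ)) *
          (min (max (polyEstimator L a n x) (sInf (φ '' Set.Icc 0 Δ)))
            (sSup (φ '' Set.Icc 0 Δ))))
        - φ p|
      ≤ Real.sqrt (∑' x : ℕ,
          (Real.exp (-(n * p)) * (n * p) ^ x / (x.factorial : ℝ)) *
            (polyEstimator L a n x -
              ∑' y : ℕ, (Real.exp (-(n * p)) * (n * p) ^ y / (y.factorial : ℝ)) *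
                polyEstimator L a n y) ^ 2)
        + 2 * bestApproxError φ L (Set.Icc 0 Δ) :=
  best_poly_estimator_bias_general φ L Δ hφ a hbest n hn p hp
end
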